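/- arXiv:cs/0501075 — 8 statements merged into one kernel-verified Lean document; each statement's English description precedes it below -/
import Mathlib

section
/- Let n, d, m, t be natural numbers, E : {0,1}^n × {0,1}^d → {0,1}^m a function and ε > 0 a real number. Suppose that for every subset W ⊆ {0,1}^m, the number of strings x ∈ {0,1}^n that do not hit W ε-correctly via E is at most 2^t. Then E is a (t + log(1/ε), 2ε)-extractor. -/
open scoped Classical

/-- A string `x` hits the test `W` ε-correctly via `E` if the fraction of seeds `y`
with `E x y ∈ W` is ε-close to the density of `W`. -/
noncomputable def hitsCorrectly {n d m : ℕ}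
    (E : (Fin n → ZMod 2) → (Fin d → ZMod 2) → (Fin m → ZMod 2))
    (x : Fin n → ZMod 2) (W : Finset (Fin m → ZMod 2)) (ε : ℝ) : Prop :=
  |((Finset.univ.filter (fun y : Fin d → ZMod 2 => E x y ∈ W)).card : ℝ) / 2 ^ d
      - (W.card : ℝ) / 2 ^ m| ≤ ε

/-- `E` is a `(k, ε)`-extractor: for every distribution `p` on `{0,1}^n` with
min-entropy at least `k` and every test `W`, the output distribution is ε-close to uniform. -/
noncomputable def IsExtractor {n d m : ℕ}
    (E : (Fin n → ZMod 2) → (Fin d → ZMod 2) → (Fin m → ZMod 2)) (k ε : ℝ) : Prop :=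
  ∀ p : (Fin n → ZMod 2) → ℝ,
    (∀ x, 0 ≤ p x) → (∑ x, p x = 1) →
    (∀ a, p a ≤ (2 : ℝ) ^ (-k)) →
    ∀ W : Finset (Fin m → ZMod 2),
      |∑ x, p x * (((Finset.univ.filter (fun y : Fin d → ZMod 2 => E x y ∈ W)).card : ℝ) / 2 ^ d)
        - (W.card : ℝ) / 2 ^ m| ≤ ε

theorem stmt0 (n d m t : ℕ) (ε : ℝ) (hε : 0 < ε)
    (E : (Fin n → ZMod 2) → (Fin d → ZMod 2) → (Fin m → ZMod 2))
    (hcount : ∀ W : Finset (Fin m → ZMod 2),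
      (Finset.univ.filter (fun x : Fin n → ZMod 2 => ¬ hitsCorrectly E x W ε)).card ≤ 2 ^ t) :
    IsExtractor E ((t : ℝ) + Real.logb 2 (1 / ε)) (2 * ε) := by
  intro p hp hsum hmin W
  set μ : ℝ := (W.card : ℝ) / 2 ^ m with hμdef
  set f : (Fin n → ZMod 2) → ℝ := fun x =>
    ((Finset.univ.filter (fun y : Fin d → ZMod 2 => E x y ∈ W)).card : ℝ) / 2 ^ d with hfdef
  have hmin' : ∀ a, p a ≤ ε / 2 ^ t := by
    intro a
    have h2 : (2:ℝ) ^ (-((t:ℝ) + Real.logb 2 (1/ε))) = ε / 2 ^ t := by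
      rw [neg_add, Real.rpow_add two_pos, Real.rpow_neg (by norm_num),
        Real.rpow_neg (by norm_num), Real.rpow_natCast,
        Real.rpow_logb two_pos (by norm_num) (by positivity), one_div, inv_inv]
      ring
    calc p a ≤ (2:ℝ) ^ (-((t:ℝ) + Real.logb 2 (1/ε))) := hmin a
      _ = ε / 2 ^ t := h2
  have hμ0 : 0 ≤ μ := by positivity
  have hμ1 : μ ≤ 1 := by
    rw [hμdef, div_le_one (by positivity)]
    calc (W.card:ℝ) ≤ ((Finset.univ : Finset (Fin m → ZMod 2)).card : ℝ) := by
          exact_mod_cast Finset.card_le_card (Finset.subset_univ W)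
      _ = 2 ^ m := by
          rw [Finset.card_univ]
          simp [Fintype.card_fun]
  have hf0 : ∀ x, 0 ≤ f x := fun x => by positivity
  have hf1 : ∀ x, f x ≤ 1 := by
    intro x
    rw [hfdef]
    rw [div_le_one (by positivity)]
    calc ((Finset.univ.filter (fun y : Fin d → ZMod 2 => E x y ∈ W)).card : ℝ)
        ≤ ((Finset.univ : Finset (Fin d → ZMod 2)).card : ℝ) := by
          exact_mod_cast Finset.card_le_card (Finset.filter_subset _ _)
      _ = 2 ^ d := by
          rw [Finset.card_univ]
          simp [Fintype.card_fun]
  have step1 : ∑ x, p x * f x - μ = ∑ x, p x * (f x - μ) := by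
    simp only [mul_sub]
    rw [Finset.sum_sub_distrib, ← Finset.sum_mul, hsum, one_mul]
  rw [step1]
  have habs : |∑ x, p x * (f x - μ)| ≤ ∑ x, p x * |f x - μ| := by
    refine (Finset.abs_sum_le_sum_abs _ _).trans ?_
    apply Finset.sum_le_sum
    intro x _
    rw [abs_mul, abs_of_nonneg (hp x)]
  refine habs.trans ?_
  have hsplit : ∑ x, p x * |f x - μ|
      = ∑ x ∈ Finset.univ.filter (fun x => hitsCorrectly E x W ε), p x * |f x - μ|
      + ∑ x ∈ Finset.univ.filter (fun x => ¬ hitsCorrectly E x W ε), p x * |f x - μ| :=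
    (Finset.sum_filter_add_sum_filter_not Finset.univ _ _).symm
  rw [hsplit]
  have hG : ∑ x ∈ Finset.univ.filter (fun x => hitsCorrectly E x W ε), p x * |f x - μ| ≤ ε := by
    calc ∑ x ∈ Finset.univ.filter (fun x => hitsCorrectly E x W ε), p x * |f x - μ|
        ≤ ∑ x ∈ Finset.univ.filter (fun x => hitsCorrectly E x W ε), p x * ε := by
          apply Finset.sum_le_sum
          intro x hx
          have hx2 := (Finset.mem_filter.mp hx).2
          unfold hitsCorrectly at hx2
          exact mul_le_mul_of_nonneg_left hx2 (hp x)
      _ = (∑ x ∈ Finset.univ.filter (fun x => hitsCorrectly E x W ε), p x) * ε := by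
          rw [Finset.sum_mul]
      _ ≤ 1 * ε := by
          apply mul_le_mul_of_nonneg_right _ hε.le
          rw [← hsum]
          exact Finset.sum_le_sum_of_subset_of_nonneg (Finset.subset_univ _)
            (fun i _ _ => hp i)
      _ = ε := one_mul ε
  have hB : ∑ x ∈ Finset.univ.filter (fun x => ¬ hitsCorrectly E x W ε), p x * |f x - μ| ≤ ε := by
    have hbound : ∀ x ∈ Finset.univ.filter (fun x => ¬ hitsCorrectly E x W ε),
        p x * |f x - μ| ≤ ε / 2 ^ t := by
      intro x _
      have h1 : |f x - μ| ≤ 1 := by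
        rw [abs_sub_le_iff]
        constructor <;> nlinarith [hf0 x, hf1 x, hμ0, hμ1]
      calc p x * |f x - μ| ≤ p x * 1 := mul_le_mul_of_nonneg_left h1 (hp x)
        _ = p x := mul_one _
        _ ≤ ε / 2 ^ t := hmin' x
    calc ∑ x ∈ Finset.univ.filter (fun x => ¬ hitsCorrectly E x W ε), p x * |f x - μ|
        ≤ ((Finset.univ.filter (fun x => ¬ hitsCorrectly E x W ε)).card : ℝ) * (ε / 2 ^ t) := by
          simpa using Finset.sum_le_card_nsmul _ _ _ hbound
      _ ≤ (2 ^ t : ℝ) * (ε / 2 ^ t) := by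
          apply mul_le_mul_of_nonneg_right _ (by positivity)
          exact_mod_cast hcount W
      _ = ε := by field_simp
  linarith
end

section
/- Let δ ∈ (0, 1/3) and γ ∈ (0, 1] be real numbers and let n be a positive integer with n ≥ ln(2/δ) and δ ≥ 2e^{−n}. Set ℓ = ⌈(3/δ)·log(2/γ)⌉ and w = 6·(1/δ)·log(2/γ)·(1/γ). Then ℓ/w < γ − (1 − δ + e^{−n})^ℓ. -/
theorem stmt1 (δ γ : ℝ) (hδ : δ ∈ Set.Ioo (0 : ℝ) (1/3)) (hγ : γ ∈ Set.Ioc (0 : ℝ) 1)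
    (n : ℕ) (hn : 0 < n) (hn2 : Real.log (2 / δ) ≤ (n : ℝ))
    (hδe : 2 * Real.exp (-(n : ℝ)) ≤ δ)
    (ℓ : ℤ) (hℓ : ℓ = ⌈(3 / δ) * Real.logb 2 (2 / γ)⌉)
    (w : ℝ) (hw : w = 6 * (1 / δ) * Real.logb 2 (2 / γ) * (1 / γ)) :
    (ℓ : ℝ) / w < γ - (1 - δ + Real.exp (-(n : ℝ))) ^ ℓ := by
  obtain ⟨hδ0, hδ3⟩ := hδ
  obtain ⟨hγ0, hγ1⟩ := hγ
  have h2γ : (2:ℝ) ≤ 2 / γ := by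
    rw [le_div_iff₀ hγ0]; linarith
  have h2γ0 : (0:ℝ) < 2 / γ := by linarith
  have hlog2 : (0:ℝ) < Real.log 2 := Real.log_pos (by norm_num)
  have hlog2le : Real.log 2 ≤ 1 := by
    have := Real.log_le_sub_one_of_pos (by norm_num : (0:ℝ) < 2)
    linarith
  set t := Real.log (2 / γ) with ht
  have ht2 : Real.log 2 ≤ t := Real.log_le_log (by norm_num) h2γ
  have ht0 : 0 < t := lt_of_lt_of_le hlog2 ht2
  have hb : Real.logb 2 (2/γ) = t / Real.log 2 := rfl
  set b := Real.logb 2 (2 / γ) with hbd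
  have hb1 : 1 ≤ b := by
    rw [hb, le_div_iff₀ hlog2]; linarith
  have hbt : t ≤ b := by
    rw [hb, le_div_iff₀ hlog2]
    nlinarith
  set L : ℝ := 3 / δ * b with hL
  have hL9 : 9 < L := by
    have h3δ : 9 < 3 / δ := by
      rw [lt_div_iff₀ hδ0]; linarith
    nlinarith
  have hℓL : L ≤ (ℓ : ℝ) := by rw [hℓ]; exact_mod_cast Int.le_ceil _
  have hℓL1 : (ℓ : ℝ) < L + 1 := by
    rw [hℓ]; exact_mod_cast Int.ceil_lt_add_one _
  have hw' : w = 2 * L / γ := by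
    rw [hw, hL]; field_simp; ring
  have hw0 : 0 < w := by
    rw [hw']
    positivity
  -- Part 1: ℓ / w < 5γ/9
  have part1 : (ℓ : ℝ) / w < 5 * γ / 9 := by
    rw [div_lt_iff₀ hw0, hw']
    have : 5 * γ / 9 * (2 * L / γ) = 10 * L / 9 := by
      field_simp; ring
    rw [this]
    nlinarith
  -- Part 2: base^ℓ ≤ 4γ/9
  have hexpn : 0 < Real.exp (-(n:ℝ)) := Real.exp_pos _
  set x := 1 - δ + Real.exp (-(n:ℝ)) with hx
  have hx0 : 0 < x := by rw [hx]; linarith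
  have hx1 : x ≤ 1 - δ / 2 := by rw [hx]; linarith
  have hℓ1 : 1 ≤ ℓ := by
    have : (1:ℝ) ≤ (ℓ:ℝ) := by linarith
    exact_mod_cast this
  set m : ℕ := ℓ.toNat with hm
  have hmℓ : (m : ℤ) = ℓ := Int.toNat_of_nonneg (by linarith)
  have hmL : L ≤ (m : ℝ) := by
    have : ((m : ℤ) : ℝ) = (ℓ : ℝ) := by exact_mod_cast hmℓ
    push_cast at this
    linarith
  have hzpow : x ^ ℓ = x ^ m := by
    rw [← hmℓ, zpow_natCast]
  have step1 : x ^ m ≤ (1 - δ/2) ^ m :=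
    pow_le_pow_left₀ (le_of_lt hx0) hx1 m
  have step2 : (1 - δ/2) ^ m ≤ Real.exp (-(δ/2)) ^ m := by
    apply pow_le_pow_left₀ (by linarith)
    have := Real.add_one_le_exp (-(δ/2))
    linarith
  have step3 : Real.exp (-(δ/2)) ^ m = Real.exp (-(δ/2) * m) := by
    rw [← Real.exp_nat_mul]; ring_nf
  have step4 : Real.exp (-(δ/2) * m) ≤ Real.exp (-(3/2) * t) := by
    apply Real.exp_le_exp.mpr
    have h1 : δ / 2 * L = 3 / 2 * b := by
      rw [hL]; field_simp
    have h2 : δ / 2 * L ≤ δ / 2 * m :=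
      mul_le_mul_of_nonneg_left hmL (by linarith)
    linarith
  have hexpt : Real.exp (-t) = γ / 2 := by
    rw [Real.exp_neg, ht, Real.exp_log h2γ0]
    field_simp
  have hlog98 : Real.log (9/8) ≤ t / 2 := by
    have h1 : Real.log ((9/8 : ℝ)^2) = 2 * Real.log (9/8) := by
      rw [Real.log_pow]; norm_num
    have h2 : ((9/8 : ℝ)^2) = 81/64 := by norm_num
    have h3 : Real.log (81/64 : ℝ) ≤ Real.log 2 :=
      Real.log_le_log (by norm_num) (by norm_num)
    rw [h2] at h1
    linarith
  have step5 : Real.exp (-(3/2) * t) ≤ 4 * γ / 9 := by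
    have : Real.exp (-(3/2) * t) = Real.exp (-t) * Real.exp (-(t/2)) := by
      rw [← Real.exp_add]; ring_nf
    rw [this, hexpt]
    have h8 : Real.exp (-(t/2)) ≤ 8/9 := by
      have h9 : Real.exp (- Real.log (9/8)) = 8/9 := by
        rw [Real.exp_neg, Real.exp_log (by norm_num : (0:ℝ) < 9/8)]
        norm_num
      calc Real.exp (-(t/2)) ≤ Real.exp (- Real.log (9/8)) :=
            Real.exp_le_exp.mpr (by linarith)
        _ = 8/9 := h9
    have h10 := mul_le_mul_of_nonneg_left h8 (by linarith : (0:ℝ) ≤ γ/2)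
    linarith
  have part2 : x ^ ℓ ≤ 4 * γ / 9 := by
    rw [hzpow]
    calc x ^ m ≤ (1 - δ/2) ^ m := step1
      _ ≤ Real.exp (-(δ/2)) ^ m := step2
      _ = Real.exp (-(δ/2) * m) := step3
      _ ≤ Real.exp (-(3/2) * t) := step4
      _ ≤ 4 * γ / 9 := step5
  linarith
end

section
/- Let n, ℓ, w be positive integers and let γ > 0, δ ∈ (0,1] be real numbers with e^{−n} ≤ δ. Let INV ⊆ ({0,1}^n)^ℓ with |INV| ≥ γ·2^{nℓ}, and assume ℓ/w < γ − (1 − δ + e^{−n})^ℓ. For y ∈ {0,1}^n let c(y) = |{(i, ȳ) : i ∈ {1,…,ℓ}, ȳ ∈ INV, ȳ_i = y}|, and let V = {y ∈ {0,1}^n : c(y) ≥ (1/w)·ℓ·2^{n(ℓ−1)}}. Then the complement of V in {0,1}^n has fewer than (δ − e^{−n})·2^n elements. -/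
/-!
Suppose `Vᶜ` were large, so that `V` has at most `(1 - δ + e^{-n}) 2^n` elements. A tuple of `INV`
either has all its coordinates in `V`, and there are at most `|V|^ℓ ≤ (1 - δ + e^{-n})^ℓ 2^{nℓ}`
such tuples, or it has a coordinate `y ∉ V`, and is then counted in `c y < ℓ 2^{n(ℓ-1)} / w`;
summing over the at most `2^n` such `y` bounds these tuples by `(ℓ / w) 2^{nℓ}`. Together this
contradicts `|INV| ≥ γ 2^{nℓ}` and `ℓ / w < γ - (1 - δ + e^{-n})^ℓ`.
-/

open scoped Classical

open Finset

section CoordCount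

variable {ι α : Type*} [Fintype ι] [DecidableEq ι] [DecidableEq α]

theorem card_filter_forall_mem_le (S : Finset (ι → α)) (V : Finset α) :
    #{f ∈ S | ∀ i, f i ∈ V} ≤ #V ^ Fintype.card ι :=
  calc #{f ∈ S | ∀ i, f i ∈ V}
      ≤ #(Fintype.piFinset fun _ : ι => V) :=
        card_le_card fun f hf => Fintype.mem_piFinset.2 (mem_filter.1 hf).2
    _ = #V ^ Fintype.card ι := by simp

variable [Fintype α]

def coordCount (S : Finset (ι → α)) (y : α) : ℕ :=
  #{p : ι × (ι → α) | p.2 ∈ S ∧ p.2 p.1 = y}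

theorem sum_coordCount (S : Finset (ι → α)) (T : Finset α) :
    ∑ y ∈ T, coordCount S y = #{p : ι × (ι → α) | p.2 ∈ S ∧ p.2 p.1 ∈ T} := by
  rw [card_eq_sum_card_fiberwise (f := fun p : ι × (ι → α) => p.2 p.1) (t := T)
    (fun p hp => (mem_filter.1 hp).2.2)]
  refine sum_congr rfl fun y hy => congrArg card ?_
  ext p
  simp only [mem_filter, mem_univ, true_and]
  constructor
  · rintro ⟨hS, rfl⟩; exact ⟨⟨hS, hy⟩, rfl⟩
  · rintro ⟨⟨hS, -⟩, rfl⟩; exact ⟨hS, rfl⟩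

theorem card_filter_not_forall_mem_le (S : Finset (ι → α)) (V : Finset α) :
    #{f ∈ S | ¬∀ i, f i ∈ V} ≤ #{p : ι × (ι → α) | p.2 ∈ S ∧ p.2 p.1 ∈ Vᶜ} := by
  refine card_le_card_of_surjOn Prod.snd fun f hf => ?_
  obtain ⟨hS, hf⟩ := mem_filter.1 hf
  obtain ⟨i, hi⟩ := not_forall.1 hf
  exact ⟨(i, f), by simpa [hS] using hi, rfl⟩

theorem card_le_pow_add_sum_coordCount (S : Finset (ι → α)) (V : Finset α) :
    #S ≤ #V ^ Fintype.card ι + ∑ y ∈ Vᶜ, coordCount S y := by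
  rw [← card_filter_add_card_filter_not (fun f : ι → α => ∀ i, f i ∈ V), sum_coordCount]
  exact add_le_add (card_filter_forall_mem_le S V) (card_filter_not_forall_mem_le S V)

theorem card_le_pow_add_card_compl_mul (S : Finset (ι → α)) (V : Finset α) {θ : ℝ}
    (hθ : ∀ y ∉ V, (coordCount S y : ℝ) ≤ θ) :
    (#S : ℝ) ≤ #V ^ Fintype.card ι + #Vᶜ * θ :=
  calc (#S : ℝ) ≤ #V ^ Fintype.card ι + ∑ y ∈ Vᶜ, (coordCount S y : ℝ) := by
        exact_mod_cast card_le_pow_add_sum_coordCount S V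
    _ ≤ #V ^ Fintype.card ι + #Vᶜ * θ := by
        grw [sum_le_card_nsmul Vᶜ _ θ fun y hy => hθ y (mem_compl.1 hy), nsmul_eq_mul]

end CoordCount

theorem natCast_mul_pow_pred_mul {R : Type*} [CommSemiring R] (ℓ : ℕ) (x : R) :
    ℓ * x ^ (ℓ - 1) * x = ℓ * x ^ ℓ := by
  cases ℓ <;> simp [pow_succ, mul_assoc]

theorem stmt2_general (n ℓ w : ℕ)
    (γ δ : ℝ)
    (INV : Finset (Fin ℓ → (Fin n → ZMod 2)))
    (hINV : γ * 2 ^ (n * ℓ) ≤ (INV.card : ℝ))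
    (hlw : (ℓ : ℝ) / (w : ℝ) < γ - (1 - δ + Real.exp (-(n : ℝ))) ^ ℓ)
    (c : (Fin n → ZMod 2) → ℕ)
    (hc : ∀ y, c y = (Finset.univ.filter
        (fun p : Fin ℓ × (Fin ℓ → (Fin n → ZMod 2)) => p.2 ∈ INV ∧ p.2 p.1 = y)).card)
    (V : Finset (Fin n → ZMod 2))
    (hV : V = Finset.univ.filter
        (fun y : Fin n → ZMod 2 => (1 / (w : ℝ)) * ℓ * 2 ^ (n * (ℓ - 1)) ≤ (c y : ℝ))) :
    ((Vᶜ).card : ℝ) < (δ - Real.exp (-(n : ℝ))) * 2 ^ n := by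
  set E := Real.exp (-(n : ℝ))
  set θ : ℝ := (1 / (w : ℝ)) * ℓ * 2 ^ (n * (ℓ - 1)) with hθ
  obtain rfl : c = coordCount INV := funext hc
  have hlight : ∀ y ∉ V, (coordCount INV y : ℝ) ≤ θ := fun y hy =>
    (not_le.1 (by simpa [hV] using hy)).le
  have hcount := card_le_pow_add_card_compl_mul INV V hlight
  by_contra! hlarge
  have hsplit : (#V : ℝ) + #Vᶜ = 2 ^ n := by
    exact_mod_cast (card_add_card_compl V).trans (by simp)
  have hheavy : (#V : ℝ) ^ ℓ ≤ (1 - δ + E) ^ ℓ * 2 ^ (n * ℓ) := by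
    rw [pow_mul, ← mul_pow]
    exact pow_le_pow_left₀ (Nat.cast_nonneg _) (by linarith) ℓ
  have hlightTotal : (#Vᶜ : ℝ) * θ ≤ ℓ / w * 2 ^ (n * ℓ) :=
    calc (#Vᶜ : ℝ) * θ ≤ 2 ^ n * θ := by
          gcongr; linarith [(#V).cast_nonneg (α := ℝ)]
      _ = 1 / w * (ℓ * (2 ^ n) ^ (ℓ - 1) * 2 ^ n) := by rw [hθ, pow_mul]; ring
      _ = ℓ / w * 2 ^ (n * ℓ) := by rw [natCast_mul_pow_pred_mul, pow_mul]; ring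
  have hscaled := mul_lt_mul_of_pos_right hlw (by positivity : (0 : ℝ) < 2 ^ (n * ℓ))
  rw [Fintype.card_fin] at hcount
  linarith

theorem stmt2 (n ℓ w : ℕ) (hn : 0 < n) (hℓ : 0 < ℓ) (hw : 0 < w)
    (γ δ : ℝ) (hγ : 0 < γ) (hδ : δ ∈ Set.Ioc (0 : ℝ) 1)
    (hδe : Real.exp (-(n : ℝ)) ≤ δ)
    (INV : Finset (Fin ℓ → (Fin n → ZMod 2)))
    (hINV : γ * 2 ^ (n * ℓ) ≤ (INV.card : ℝ))
    (hlw : (ℓ : ℝ) / (w : ℝ) < γ - (1 - δ + Real.exp (-(n : ℝ))) ^ ℓ)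
    (c : (Fin n → ZMod 2) → ℕ)
    (hc : ∀ y, c y = (Finset.univ.filter
        (fun p : Fin ℓ × (Fin ℓ → (Fin n → ZMod 2)) => p.2 ∈ INV ∧ p.2 p.1 = y)).card)
    (V : Finset (Fin n → ZMod 2))
    (hV : V = Finset.univ.filter
        (fun y : Fin n → ZMod 2 => (1 / (w : ℝ)) * ℓ * 2 ^ (n * (ℓ - 1)) ≤ (c y : ℝ))) :
    ((Vᶜ).card : ℝ) < (δ - Real.exp (-(n : ℝ))) * 2 ^ n :=
  stmt2_general n ℓ w γ δ INV hINV hlw c hc V hV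
end

section
/- For every integer N ≥ 1, the product ∏_{i=1}^{N−1} ⌈N/i⌉ is at most the binomial coefficient C(2N−1, N−1), which is at most 2^{2N}. -/
lemma aux_prod (M : ℕ) : ∀ k : ℕ,
    (∏ i ∈ Finset.Icc 1 k, (M + 1 + i - 1) / i) ≤ Nat.choose (M + k) k := by
  intro k
  induction k with
  | zero => simp
  | succ k ih =>
    rw [Finset.prod_Icc_succ_top (by omega)]
    have h1 : M + 1 + (k+1) - 1 = M + k + 1 := by omega
    rw [h1]
    calc (∏ i ∈ Finset.Icc 1 k, (M + 1 + i - 1) / i) * ((M + k + 1) / (k+1))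
        ≤ Nat.choose (M + k) k * ((M + k + 1) / (k+1)) :=
          Nat.mul_le_mul_right _ ih
      _ ≤ Nat.choose (M + k) k * (M + k + 1) / (k+1) :=
          Nat.mul_div_le_mul_div_assoc _ _ _
      _ = Nat.choose (M + k + 1) (k + 1) := by
          rw [mul_comm, Nat.add_one_mul_choose_eq, Nat.mul_div_cancel _ (Nat.succ_pos k)]

lemma aux_pow (n k : ℕ) : Nat.choose n k ≤ 2 ^ n := by
  rcases le_or_gt k n with h | h
  · calc Nat.choose n k ≤ ∑ m ∈ Finset.range (n+1), n.choose m :=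
        Finset.single_le_sum (fun _ _ => Nat.zero_le _) (Finset.mem_range.mpr (by omega))
      _ = 2 ^ n := Nat.sum_range_choose n
  · rw [Nat.choose_eq_zero_of_lt h]; exact Nat.zero_le _

theorem stmt4 (N : ℕ) (hN : 1 ≤ N) :
    (∏ i ∈ Finset.Icc 1 (N - 1), (N + i - 1) / i) ≤ Nat.choose (2 * N - 1) (N - 1)
    ∧ Nat.choose (2 * N - 1) (N - 1) ≤ 2 ^ (2 * N) := by
  obtain ⟨M, rfl⟩ : ∃ M, N = M + 1 := ⟨N - 1, by omega⟩
  constructor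
  · have := aux_prod M M
    simp only [Nat.add_sub_cancel]
    calc (∏ i ∈ Finset.Icc 1 M, (M + 1 + i - 1) / i) ≤ Nat.choose (M + M) M := this
      _ ≤ Nat.choose (2 * (M + 1) - 1) M := Nat.choose_le_choose _ (by omega)
  · exact le_trans (aux_pow _ _) (Nat.pow_le_pow_right (by norm_num) (by omega))
end

section
/- Let k be a positive integer and α > 0 a real number. For every function u : {0,1}^k → ZMod 2, the number of strings z ∈ {0,1}^k such that |{r ∈ {0,1}^k : u(r) = b(z,r)}| ≥ (1/2 + α)·2^k is at most 1/(4α²). -/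
/-!
Encode agreement with `±1` signs: `T z = ∑ r, (-1)^(u r) (-1)^(b(z,r))` equals `2 N(z) - 2^k`,
where `N(z)` counts the agreements of `u` with `b(z, ·)`, so every `z` in question has
`T z ≥ 2α 2^k`. By Parseval for the characters `r ↦ (-1)^(b(z,r))` of `(ZMod 2)^k`, and since
`u` takes signs `±1`, `∑_z (T z)² = 2^k · 2^k`. Hence at most `1/(4α²)` such `z` exist.
-/

open Finset Matrix

noncomputable def signChar : AddChar (ZMod 2) ℝ := AddChar.zmodChar 2 (ζ := -1) (by norm_num)

lemma ZMod.eq_zero_or_eq_one (a : ZMod 2) : a = 0 ∨ a = 1 := by revert a; decide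

lemma signChar_one : signChar 1 = -1 := pow_one (-1 : ℝ)

lemma signChar_eq_one_iff {a : ZMod 2} : signChar a = 1 ↔ a = 0 := by
  rcases a.eq_zero_or_eq_one with rfl | rfl <;> norm_num [signChar_one]

lemma signChar_mul_signChar (a b : ZMod 2) :
    signChar a * signChar b = if a = b then 1 else -1 := by
  rw [← AddChar.map_add_eq_mul]
  by_cases h : a = b
  · simp [h, CharTwo.add_self_eq_zero]
  · have hab : a + b = 1 :=
      (a + b).eq_zero_or_eq_one.resolve_left (CharTwo.add_eq_zero.not.mpr h)
    simp [h, hab, signChar_one]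

variable {ι : Type*} [Fintype ι] [DecidableEq ι]

lemma sum_signChar_dotProduct (s : ι → ZMod 2) :
    ∑ z, signChar (s ⬝ᵥ z) = if s = 0 then (Fintype.card (ι → ZMod 2) : ℝ) else 0 := by
  let ψ := signChar.compAddMonoidHom (AddMonoidHom.mk' (s ⬝ᵥ ·) (dotProduct_add s))
  have hψ : ψ = 0 ↔ s = 0 := by
    rw [← dotProduct_eq_zero_iff, AddChar.eq_zero_iff]
    simp [ψ, signChar_eq_one_iff]
  exact ψ.sum_eq_ite.trans (if_congr hψ rfl rfl)

lemma sum_sq_sum_mul_signChar_dotProduct (f : (ι → ZMod 2) → ℝ) :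
    ∑ z, (∑ r, f r * signChar (z ⬝ᵥ r)) ^ 2
      = Fintype.card (ι → ZMod 2) * ∑ r, f r ^ 2 := by
  have hpair (r r' : ι → ZMod 2) (z) :
      signChar (z ⬝ᵥ r) * signChar (z ⬝ᵥ r') = signChar ((r + r') ⬝ᵥ z) := by
    rw [← AddChar.map_add_eq_mul, add_dotProduct, dotProduct_comm r, dotProduct_comm r']
  have hzero (r r' : ι → ZMod 2) : r + r' = 0 ↔ r' = r := by
    simp [funext_iff, CharTwo.add_eq_zero, eq_comm]
  calc ∑ z, (∑ r, f r * signChar (z ⬝ᵥ r)) ^ 2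
      = ∑ r, ∑ r', f r * f r' * ∑ z, signChar ((r + r') ⬝ᵥ z) := by
        simp_rw [sq, sum_mul_sum, mul_sum, ← hpair]
        rw [sum_comm]
        refine sum_congr rfl fun r _ => ?_
        rw [sum_comm]
        refine sum_congr rfl fun r' _ => sum_congr rfl fun z _ => by ring
    _ = _ := by
        simp_rw [sum_signChar_dotProduct, hzero, mul_ite, mul_zero, sum_ite_eq', mem_univ, if_true,
          mul_sum]
        refine sum_congr rfl fun r _ => by ring

lemma sum_signChar_mul_signChar {α : Type*} [Fintype α] (f g : α → ZMod 2) :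
    ∑ r, signChar (f r) * signChar (g r) = 2 * #{r | f r = g r} - Fintype.card α := by
  have hsign (p : Prop) [Decidable p] :
      (if p then (1 : ℝ) else -1) = 2 * (if p then 1 else 0) - 1 := by
    split_ifs <;> norm_num
  simp_rw [signChar_mul_signChar, hsign, sum_sub_distrib, ← mul_sum, sum_boole, sum_const,
    card_univ, nsmul_one]

lemma card_mul_sq_le_sum_sq {α : Type*} [Fintype α] (s : Finset α) (T : α → ℝ) {c : ℝ}
    (hc : 0 ≤ c) (h : ∀ z ∈ s, c ≤ T z) : #s * c ^ 2 ≤ ∑ z, T z ^ 2 := calc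
  #s * c ^ 2 = ∑ _z ∈ s, c ^ 2 := by rw [sum_const, nsmul_eq_mul]
  _ ≤ ∑ z ∈ s, T z ^ 2 := sum_le_sum fun z hz => pow_le_pow_left₀ hc (h z hz) 2
  _ ≤ ∑ z, T z ^ 2 := sum_le_sum_of_subset_of_nonneg (subset_univ s) fun z _ _ => sq_nonneg _

open scoped Classical

theorem stmt6_general (k : ℕ) (α : ℝ) (hα : 0 < α)
    (u : (Fin k → ZMod 2) → ZMod 2) :
    ((Finset.univ.filter (fun z : Fin k → ZMod 2 =>
        (1 / 2 + α) * 2 ^ k ≤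
          ((Finset.univ.filter (fun r : Fin k → ZMod 2 =>
            u r = ∑ i, z i * r i)).card : ℝ))).card : ℝ)
      ≤ 1 / (4 * α ^ 2) := by
  change ((#{z | (1 / 2 + α) * 2 ^ k ≤ (#{r | u r = z ⬝ᵥ r} : ℝ)} : ℕ) : ℝ) ≤ _
  set S := ({z | (1 / 2 + α) * 2 ^ k ≤ (#{r | u r = z ⬝ᵥ r} : ℝ)} : Finset (Fin k → ZMod 2))
  let T z := ∑ r, signChar (u r) * signChar (z ⬝ᵥ r)
  have hcard : (Fintype.card (Fin k → ZMod 2) : ℝ) = 2 ^ k := by simp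
  have hT : ∀ z ∈ S, 2 * α * 2 ^ k ≤ T z := fun z hz => by
    have := (mem_filter.mp hz).2
    simp only [T, sum_signChar_mul_signChar, hcard]
    linarith
  have hparseval : ∑ z, T z ^ 2 = 2 ^ k * 2 ^ k := by
    refine (sum_sq_sum_mul_signChar_dotProduct (fun r => signChar (u r))).trans ?_
    simp only [sq, signChar_mul_signChar, if_true, sum_const, card_univ, nsmul_one, hcard]
  have hcount := card_mul_sq_le_sum_sq S T (by positivity) hT
  rw [hparseval] at hcount
  rw [le_div_iff₀ (by positivity)]
  refine le_of_mul_le_mul_right ?_ (by positivity : (0 : ℝ) < 2 ^ k * 2 ^ k)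
  linear_combination hcount

theorem stmt6 (k : ℕ) (hk : 0 < k) (α : ℝ) (hα : 0 < α)
    (u : (Fin k → ZMod 2) → ZMod 2) :
    ((Finset.univ.filter (fun z : Fin k → ZMod 2 =>
        (1 / 2 + α) * 2 ^ k ≤
          ((Finset.univ.filter (fun r : Fin k → ZMod 2 =>
            u r = ∑ i, z i * r i)).card : ℝ))).card : ℝ)
      ≤ 1 / (4 * α ^ 2) :=
  stmt6_general k α hα u
end

section
/- Let n, ℓ, L ≥ 1 be integers and ε > 0. Let C_3 : {0,1}^{2ℓn+1} × ({0,1}^{ℓn})^{L−1} → ZMod 2. Then there exist four functions C_{2,1}, …, C_{2,4} : {0,1}^{ℓn} × {0,1}^{ℓn} × ({0,1}^{ℓn})^{L−1} → ZMod 2 with the following property. Let R be any permutation of {0,1}^{ℓn} that is the ℓ-direct product of a permutation of {0,1}^n; write H_R(x̄, r) = R(x̄) ⊙ r ⊙ b(x̄,r), for y ∈ {0,1}^{2ℓn+1} with first ℓn bits y_1 set C_3^R(y) = C_3(y, (R(y_1), …, R^{L−1}(y_1))), and set C_{2,i}^R(ȳ, r) = C_{2,i}(ȳ, r, (R(ȳ),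 …, R^{L−1}(ȳ))). If |Pr_{x̄,r}(C_3^R(H_R(x̄,r)) = 1) − Pr_u(C_3^R(u) = 1)| > ε, where x̄, r are uniform on {0,1}^{ℓn} and u is uniform on {0,1}^{2ℓn+1}, then there exists i ∈ {1,2,3,4} with Pr_{x̄,r}(C_{2,i}^R(R(x̄), r) = b(x̄,r)) > 1/2 + ε. -/
open scoped Classical

abbrev Str (k : ℕ) : Type := Fin k → ZMod 2

/-- inner product mod 2 of two block-strings in `({0,1}^n)^ℓ ≅ {0,1}^{ℓn}` -/
def ipb {ℓ n : ℕ} (x r : Fin ℓ → Str n) : ZMod 2 := ∑ i, ∑ j, x i j * r i j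

/-- fraction of elements of a finite type satisfying `p` (probability under uniform distribution) -/
noncomputable def fr {α : Type} [Fintype α] (p : α → Prop) : ℝ :=
  ((Finset.univ.filter p).card : ℝ) / (Fintype.card α : ℝ)

lemma fr_eq_sum {α : Type} [Fintype α] (p : α → Prop) [DecidablePred p] :
    fr p = (∑ x : α, if p x then (1:ℝ) else 0) / (Fintype.card α : ℝ) := by
  rw [fr, Finset.sum_boole]
  congr!

lemma zmod2_cases (b : ZMod 2) : b = 0 ∨ b = 1 := by
  have h : ∀ c : ZMod 2, c = 0 ∨ c = 1 := by decide
  exact h b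

lemma fr_congr {α : Type} [Fintype α] {p q : α → Prop} (h : ∀ x, p x ↔ q x) :
    fr p = fr q := by
  unfold fr
  congr 1
  norm_cast
  congr 1
  exact Finset.filter_congr (fun x _ => h x)

lemma zmod2_sum (f : ZMod 2 → ℝ) : ∑ σ : ZMod 2, f σ = f 0 + f 1 := by
  have h : (Finset.univ : Finset (ZMod 2)) = {0, 1} := by decide
  rw [h, Finset.sum_pair (by decide : (0:ZMod 2) ≠ 1)]

lemma key_pointwise (q0 q1 : Prop) [Decidable q0] [Decidable q1] (b : ZMod 2) :
    (if (if q0 then (0:ZMod 2) else 1) = b then (1:ℝ) else 0)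
      + (if (if q1 then (1:ZMod 2) else 0) = b then (1:ℝ) else 0)
    = 1 + 2 * (if (if b = 0 then q0 else q1) then (1:ℝ) else 0)
      - (if q0 then (1:ℝ) else 0) - (if q1 then (1:ℝ) else 0) := by
  rcases zmod2_cases b with hb | hb <;> subst hb <;>
    by_cases h0 : q0 <;> by_cases h1 : q1 <;>
    simp [h0, h1, (by decide : (1:ZMod 2) ≠ 0), (by decide : (0:ZMod 2) ≠ 1)] <;> norm_num

lemma flip_pointwise (q : Prop) [Decidable q] (x y b : ZMod 2) (hxy : x ≠ y) :
    (if (if q then x else y) = b then (1:ℝ) else 0)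
      = 1 - (if (if q then y else x) = b then (1:ℝ) else 0) := by
  have h2 : ∀ x y b : ZMod 2, x ≠ y → ((x = b) ↔ ¬ (y = b)) := by decide
  by_cases hq : q <;> simp only [hq, if_true, if_false] <;>
    by_cases hxb : x = b <;> by_cases hyb : y = b <;> simp [hxb, hyb] <;>
    first
      | exact absurd (hxb.trans hyb.symm) hxy
      | { have := (h2 x y b hxy); tauto }

lemma core {Ω : Type} [Fintype Ω] [Nonempty Ω] {T : Type} [Fintype T]
    (hT : Fintype.card T = 2 * Fintype.card Ω)
    (q0 q1 : Ω → Prop) (b : Ω → ZMod 2) (qT : T → Prop)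
    [DecidablePred q0] [DecidablePred q1] [DecidablePred qT]
    (hqT : (∑ u : T, if qT u then (1:ℝ) else 0)
        = (∑ p : Ω, if q0 p then (1:ℝ) else 0) + (∑ p : Ω, if q1 p then (1:ℝ) else 0))
    (ε : ℝ)
    (H : ε < |fr (fun p : Ω => if b p = 0 then q0 p else q1 p) - fr qT|) :
    (1/2 + ε < fr (fun p : Ω => (if q0 p then (0:ZMod 2) else 1) = b p))
    ∨ (1/2 + ε < fr (fun p : Ω => (if q1 p then (1:ZMod 2) else 0) = b p))
    ∨ (1/2 + ε < fr (fun p : Ω => (if q0 p then (1:ZMod 2) else 0) = b p))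
    ∨ (1/2 + ε < fr (fun p : Ω => (if q1 p then (0:ZMod 2) else 1) = b p)) := by
  classical
  rw [fr_eq_sum, fr_eq_sum, hqT] at H
  have hTK : ((Fintype.card T : ℕ) : ℝ) = 2 * ((Fintype.card Ω : ℕ) : ℝ) := by
    exact_mod_cast hT
  rw [hTK] at H
  simp only [fr_eq_sum]
  set K : ℝ := ((Fintype.card Ω : ℕ) : ℝ) with hK
  have hKpos : (0:ℝ) < K := by
    rw [hK]; exact_mod_cast Fintype.card_pos
  set A : ℝ := ∑ p : Ω, if (if b p = 0 then q0 p else q1 p) then (1:ℝ) else 0 with hA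
  set B0 : ℝ := ∑ p : Ω, if q0 p then (1:ℝ) else 0 with hB0
  set B1 : ℝ := ∑ p : Ω, if q1 p then (1:ℝ) else 0 with hB1
  set S0 : ℝ := ∑ p : Ω, if (if q0 p then (0:ZMod 2) else 1) = b p then (1:ℝ) else 0 with hS0
  set S1 : ℝ := ∑ p : Ω, if (if q1 p then (1:ZMod 2) else 0) = b p then (1:ℝ) else 0 with hS1
  set S2 : ℝ := ∑ p : Ω, if (if q0 p then (1:ZMod 2) else 0) = b p then (1:ℝ) else 0 with hS2
  set S3 : ℝ := ∑ p : Ω, if (if q1 p then (0:ZMod 2) else 1) = b p then (1:ℝ) else 0 with hS3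
  have hsumK : (∑ _p : Ω, (1:ℝ)) = K := by simp [hK]
  have hkey : S0 + S1 = K + 2*A - B0 - B1 := by
    rw [hS0, hS1, hA, hB0, hB1, ← hsumK, ← Finset.sum_add_distrib, Finset.mul_sum,
      ← Finset.sum_add_distrib, ← Finset.sum_sub_distrib, ← Finset.sum_sub_distrib]
    exact Finset.sum_congr rfl fun p _ => key_pointwise (q0 p) (q1 p) (b p)
  have hflip0 : S2 = K - S0 := by
    rw [hS2, hS0, ← hsumK, ← Finset.sum_sub_distrib]
    exact Finset.sum_congr rfl fun p _ =>
      flip_pointwise (q0 p) 1 0 (b p) (by decide)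
  have hflip1 : S3 = K - S1 := by
    rw [hS3, hS1, ← hsumK, ← Finset.sum_sub_distrib]
    exact Finset.sum_congr rfl fun p _ =>
      flip_pointwise (q1 p) 0 1 (b p) (by decide)
  have heq : A / K - (B0 + B1) / (2*K) = (2*A - (B0 + B1)) / (2*K) := by
    field_simp
  replace H : ε < |A / K - (B0 + B1) / (2*K)| := H
  rw [heq, abs_div, abs_of_pos (by positivity : (0:ℝ) < 2*K)] at H
  have H' : ε * (2*K) < |2*A - (B0 + B1)| := (lt_div_iff₀ (by positivity)).mp H
  have goal0 : (1/2 + ε) * K < S0 → 1/2 + ε < (∑ x : Ω, if (if q0 x then (0:ZMod 2) else 1) = b x then (1:ℝ) else 0) / K :=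
    fun h => (lt_div_iff₀ hKpos).mpr h
  have goal1 : (1/2 + ε) * K < S1 → 1/2 + ε < (∑ x : Ω, if (if q1 x then (1:ZMod 2) else 0) = b x then (1:ℝ) else 0) / K :=
    fun h => (lt_div_iff₀ hKpos).mpr h
  have goal2 : (1/2 + ε) * K < S2 → 1/2 + ε < (∑ x : Ω, if (if q0 x then (1:ZMod 2) else 0) = b x then (1:ℝ) else 0) / K :=
    fun h => (lt_div_iff₀ hKpos).mpr h
  have goal3 : (1/2 + ε) * K < S3 → 1/2 + ε < (∑ x : Ω, if (if q1 x then (0:ZMod 2) else 1) = b x then (1:ℝ) else 0) / K :=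
    fun h => (lt_div_iff₀ hKpos).mpr h
  rcases lt_abs.mp H' with h | h
  · by_cases h0 : (1/2 + ε) * K < S0
    · exact Or.inl (goal0 h0)
    · push_neg at h0
      exact Or.inr (Or.inl (goal1 (by nlinarith [hkey])))
  · by_cases h0 : (1/2 + ε) * K < S2
    · exact Or.inr (Or.inr (Or.inl (goal2 h0)))
    · push_neg at h0
      exact Or.inr (Or.inr (Or.inr (goal3 (by nlinarith [hkey, hflip0, hflip1]))))

theorem stmt8 (n ℓ L : ℕ) (hn : 1 ≤ n) (hℓ : 1 ≤ ℓ) (hL : 1 ≤ L) (ε : ℝ) (hε : 0 < ε)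
    (C3 : ((Fin ℓ → Str n) × (Fin ℓ → Str n) × ZMod 2) →
      (Fin (L - 1) → (Fin ℓ → Str n)) → ZMod 2) :
    ∃ C2 : Fin 4 → (Fin ℓ → Str n) → (Fin ℓ → Str n) →
        (Fin (L - 1) → (Fin ℓ → Str n)) → ZMod 2,
      ∀ R : Equiv.Perm (Fin ℓ → Str n),
        (∃ R₀ : Equiv.Perm (Str n), ∀ x i, R x i = R₀ (x i)) →
        ε < |fr (fun p : (Fin ℓ → Str n) × (Fin ℓ → Str n) =>
                C3 (R p.1, p.2, ipb p.1 p.2)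
                  (fun i : Fin (L - 1) => (R ^ ((i : ℕ) + 1)) (R p.1)) = 1)
              - fr (fun u : (Fin ℓ → Str n) × (Fin ℓ → Str n) × ZMod 2 =>
                C3 u (fun i : Fin (L - 1) => (R ^ ((i : ℕ) + 1)) u.1) = 1)| →
        ∃ i : Fin 4,
          1 / 2 + ε < fr (fun p : (Fin ℓ → Str n) × (Fin ℓ → Str n) =>
              C2 i (R p.1) p.2
                (fun j : Fin (L - 1) => (R ^ ((j : ℕ) + 1)) (R p.1)) = ipb p.1 p.2) := by
  classical
  refine ⟨fun i w r aux =>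
      if i = 0 then (if C3 (w, r, 0) aux = 1 then 0 else 1)
      else if i = 1 then (if C3 (w, r, 1) aux = 1 then 1 else 0)
      else if i = 2 then (if C3 (w, r, 0) aux = 1 then 1 else 0)
      else (if C3 (w, r, 1) aux = 1 then 0 else 1), ?_⟩
  intro R _ hdiff
  have hT : Fintype.card ((Fin ℓ → Str n) × (Fin ℓ → Str n) × ZMod 2)
      = 2 * Fintype.card ((Fin ℓ → Str n) × (Fin ℓ → Str n)) := by
    simp only [Fintype.card_prod, ZMod.card]
    ring
  -- change of variables in the first component
  have h0 : (∑ p : (Fin ℓ → Str n) × (Fin ℓ → Str n),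
        if C3 (R p.1, p.2, 0) (fun i : Fin (L - 1) => (R ^ ((i : ℕ) + 1)) (R p.1)) = 1
          then (1:ℝ) else 0)
      = ∑ p : (Fin ℓ → Str n) × (Fin ℓ → Str n),
        if C3 (p.1, p.2, 0) (fun i : Fin (L - 1) => (R ^ ((i : ℕ) + 1)) p.1) = 1
          then (1:ℝ) else 0 :=
    Equiv.sum_comp (R.prodCongr (Equiv.refl _))
      (fun p => if C3 (p.1, p.2, 0) (fun i : Fin (L - 1) => (R ^ ((i : ℕ) + 1)) p.1) = 1
          then (1:ℝ) else 0)
  have h1 : (∑ p : (Fin ℓ → Str n) × (Fin ℓ → Str n),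
        if C3 (R p.1, p.2, 1) (fun i : Fin (L - 1) => (R ^ ((i : ℕ) + 1)) (R p.1)) = 1
          then (1:ℝ) else 0)
      = ∑ p : (Fin ℓ → Str n) × (Fin ℓ → Str n),
        if C3 (p.1, p.2, 1) (fun i : Fin (L - 1) => (R ^ ((i : ℕ) + 1)) p.1) = 1
          then (1:ℝ) else 0 :=
    Equiv.sum_comp (R.prodCongr (Equiv.refl _))
      (fun p => if C3 (p.1, p.2, 1) (fun i : Fin (L - 1) => (R ^ ((i : ℕ) + 1)) p.1) = 1
          then (1:ℝ) else 0)
  have hsplit : (∑ u : (Fin ℓ → Str n) × (Fin ℓ → Str n) × ZMod 2,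
        if C3 u (fun i : Fin (L - 1) => (R ^ ((i : ℕ) + 1)) u.1) = 1 then (1:ℝ) else 0)
      = (∑ p : (Fin ℓ → Str n) × (Fin ℓ → Str n),
          if C3 (p.1, p.2, 0) (fun i : Fin (L - 1) => (R ^ ((i : ℕ) + 1)) p.1) = 1
            then (1:ℝ) else 0)
        + (∑ p : (Fin ℓ → Str n) × (Fin ℓ → Str n),
          if C3 (p.1, p.2, 1) (fun i : Fin (L - 1) => (R ^ ((i : ℕ) + 1)) p.1) = 1
            then (1:ℝ) else 0) := by
    simp only [Fintype.sum_prod_type, zmod2_sum, ← Finset.sum_add_distrib]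
  have hqT := hsplit.trans (congrArg₂ (· + ·) h0.symm h1.symm)
  have e1 : fr (fun p : (Fin ℓ → Str n) × (Fin ℓ → Str n) =>
        C3 (R p.1, p.2, ipb p.1 p.2)
          (fun i : Fin (L - 1) => (R ^ ((i : ℕ) + 1)) (R p.1)) = 1)
      = fr (fun p : (Fin ℓ → Str n) × (Fin ℓ → Str n) =>
        if ipb p.1 p.2 = 0
        then C3 (R p.1, p.2, (0:ZMod 2))
          (fun i : Fin (L - 1) => (R ^ ((i : ℕ) + 1)) (R p.1)) = 1
        else C3 (R p.1, p.2, (1:ZMod 2))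
          (fun i : Fin (L - 1) => (R ^ ((i : ℕ) + 1)) (R p.1)) = 1) :=
    fr_congr fun p => by
      rcases zmod2_cases (ipb p.1 p.2) with hb | hb <;> rw [hb] <;>
        simp [(by decide : (1:ZMod 2) ≠ 0)]
  rw [e1] at hdiff
  rcases core hT
      (fun p : (Fin ℓ → Str n) × (Fin ℓ → Str n) =>
        C3 (R p.1, p.2, 0) (fun i : Fin (L - 1) => (R ^ ((i : ℕ) + 1)) (R p.1)) = 1)
      (fun p : (Fin ℓ → Str n) × (Fin ℓ → Str n) =>
        C3 (R p.1, p.2, 1) (fun i : Fin (L - 1) => (R ^ ((i : ℕ) + 1)) (R p.1)) = 1)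
      (fun p => ipb p.1 p.2)
      (fun u : (Fin ℓ → Str n) × (Fin ℓ → Str n) × ZMod 2 =>
        C3 u (fun i : Fin (L - 1) => (R ^ ((i : ℕ) + 1)) u.1) = 1)
      hqT ε hdiff with h | h | h | h
  · refine ⟨0, lt_of_lt_of_le h (le_of_eq (fr_congr fun p => ?_))⟩
    by_cases hc : C3 (R p.1, p.2, 0)
        (fun i : Fin (L - 1) => (R ^ ((i : ℕ) + 1)) (R p.1)) = 1 <;>
      simp [hc]
  · refine ⟨1, lt_of_lt_of_le h (le_of_eq (fr_congr fun p => ?_))⟩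
    by_cases hc : C3 (R p.1, p.2, 1)
        (fun i : Fin (L - 1) => (R ^ ((i : ℕ) + 1)) (R p.1)) = 1 <;>
      simp [hc, (by decide : (1:Fin 4) ≠ 0)]
  · refine ⟨2, lt_of_lt_of_le h (le_of_eq (fr_congr fun p => ?_))⟩
    by_cases hc : C3 (R p.1, p.2, 0)
        (fun i : Fin (L - 1) => (R ^ ((i : ℕ) + 1)) (R p.1)) = 1 <;>
      simp [hc, (by decide : (2:Fin 4) ≠ 0), (by decide : (2:Fin 4) ≠ 1)]
  · refine ⟨3, lt_of_lt_of_le h (le_of_eq (fr_congr fun p => ?_))⟩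
    by_cases hc : C3 (R p.1, p.2, 1)
        (fun i : Fin (L - 1) => (R ^ ((i : ℕ) + 1)) (R p.1)) = 1 <;>
      simp [hc, (by decide : (3:Fin 4) ≠ 0), (by decide : (3:Fin 4) ≠ 1),
        (by decide : (3:Fin 4) ≠ 2)]
end

section
/- Let n, ℓ ≥ 1 and m ≥ 2 be integers, ε > 0, and let C : (ZMod 2)^{m−1} → ZMod 2. Then there exists a function B : ({0,1}^{ℓn})^{m−1} → Finset({0,1}^{ℓn}) all of whose output sets have size at most m²/ε², such that the following holds for every function X̄ : ({0,1}^n)^ℓ → {0,1}^{ℓn}: if Pr_{x̄,r}(C(b(X̄(x̄−m+1),r), b(X̄(x̄−m+2),r), …, b(X̄(x̄−1),r)) = b(X̄(x̄),r)) ≥ 1/2 + ε/m, where x̄ is uniform on ({0,1}^n)^ℓ and r is uniform on {0,1}^{ℓn}, then for at least (ε/m)·2^{ℓn} tuples x̄ ∈ ({0,1}^n)^ℓ it holds that X̄(x̄) ∈ B(X̄(x̄−m+1), …, X̄(x̄−1)). -/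
open scoped Classical

/-- little-endian identification of `{0,1}^n` with `Fin (2^n)` -/
def strToFin (n : ℕ) (x : Str n) : Fin (2 ^ n) :=
  ⟨∑ j : Fin n, (x j).val * 2 ^ (j : ℕ), by
    have hgeom : ∀ M : ℕ, (∑ j ∈ Finset.range M, 2 ^ j) < 2 ^ M := by
      intro M
      induction M with
      | zero => simp
      | succ K ih =>
        rw [Finset.sum_range_succ, pow_succ]
        omega
    calc ∑ j : Fin n, (x j).val * 2 ^ (j : ℕ)
        ≤ ∑ j : Fin n, 1 * 2 ^ (j : ℕ) := by
          refine Finset.sum_le_sum fun j _ => Nat.mul_le_mul_right _ ?_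
          exact Nat.lt_succ_iff.mp (ZMod.val_lt (x j))
      _ = ∑ j ∈ Finset.range n, 2 ^ j := by
          simp only [one_mul]
          exact Fin.sum_univ_eq_sum_range (fun j => 2 ^ j) n
      _ < 2 ^ n := hgeom n⟩

/-- inverse identification of `Fin (2^n)` with `{0,1}^n` -/
def finToStr (n : ℕ) (v : Fin (2 ^ n)) : Str n :=
  fun j => (((v : ℕ) / 2 ^ (j : ℕ)) % 2 : ℕ)

/-- addition of an integer constant modulo `2^n`, on `{0,1}^n` identified with `ZMod (2^n)` -/
def shiftStr (n : ℕ) (x : Str n) (k : ℤ) : Str n :=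
  haveI : NeZero (2 ^ n) := ⟨(by positivity : (0:ℕ) < 2 ^ n).ne'⟩
  finToStr n ⟨(((strToFin n x : ℕ) : ZMod (2 ^ n)) + (k : ZMod (2 ^ n))).val, ZMod.val_lt _⟩

/-!
For a prefix `v`, let `B v` be the set of `y` whose Hadamard codeword `r ↦ b(y, r)` has
correlation at least `θ = ε/m` with the predictor `r ↦ C(b(v₁, r), …, b(v_{m-1}, r))`.
By Parseval the squared correlations of a `±1`-valued function with all characters sum to `1`,
so `|B v| ≤ 1/θ²`. If the predictor is right with probability `≥ 1/2 + θ` over `(x̄, r)`,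
averaging over `x̄` shows that for at least a `θ` fraction of the `x̄` it is right with
probability `≥ 1/2 + θ/2` over `r`, which says exactly that `X̄(x̄) ∈ B(X̄(x̄-m+1), …)`.
-/

namespace GoldreichLevin

open Finset

lemma zmod_two_eq_zero_or_one (a : ZMod 2) : a = 0 ∨ a = 1 := by
  revert a; decide

noncomputable def chi (a : ZMod 2) : ℝ := (-1) ^ a.val

@[simp] lemma chi_zero : chi 0 = 1 := by simp [chi]

@[simp] lemma chi_one : chi 1 = -1 := by simp [chi, ZMod.val_one]

lemma chi_add (a b : ZMod 2) : chi (a + b) = chi a * chi b := by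
  rcases zmod_two_eq_zero_or_one a with rfl | rfl <;>
    rcases zmod_two_eq_zero_or_one b with rfl | rfl <;>
    simp [chi, CharTwo.add_self_eq_zero, ZMod.val_one]

lemma chi_add_eq_ite (a b : ZMod 2) : chi (a + b) = if a = b then 1 else -1 := by
  rcases zmod_two_eq_zero_or_one a with rfl | rfl <;>
    rcases zmod_two_eq_zero_or_one b with rfl | rfl <;>
    simp [chi, CharTwo.add_self_eq_zero, ZMod.val_one]

lemma chi_sub (a b : ZMod 2) : chi (a - b) = chi a * chi b := by
  rw [sub_eq_add_neg, ZMod.neg_eq_self_mod_two, chi_add]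

lemma chi_mul_self (a : ZMod 2) : chi a * chi a = 1 := by
  rw [← chi_add, CharTwo.add_self_eq_zero, chi_zero]

section InnerProduct

variable {ℓ n : ℕ}

lemma ipb_add_left (x y r : Fin ℓ → Str n) : ipb (x + y) r = ipb x r + ipb y r := by
  simp only [ipb, Pi.add_apply, add_mul, sum_add_distrib]

lemma ipb_sub_right (x r s : Fin ℓ → Str n) : ipb x (r - s) = ipb x r - ipb x s := by
  simp only [ipb, Pi.sub_apply, mul_sub, sum_sub_distrib]

lemma ipb_single_left (i : Fin ℓ) (j : Fin n) (z : Fin ℓ → Str n) :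
    ipb (Pi.single i (Pi.single j 1)) z = z i j := by
  rw [ipb, Fintype.sum_eq_single i, Fintype.sum_eq_single j] <;> intros <;> simp_all

lemma sum_chi_ipb_left (z : Fin ℓ → Str n) :
    ∑ y, chi (ipb y z) = if z = 0 then (Fintype.card (Fin ℓ → Str n) : ℝ) else 0 := by
  split_ifs with hz
  · simp [hz, ipb]
  obtain ⟨i, hi⟩ := Function.ne_iff.mp hz
  obtain ⟨j, hj⟩ := Function.ne_iff.mp hi
  have hzij : z i j = 1 := (zmod_two_eq_zero_or_one _).resolve_left hj
  -- translating `y` by a vector `e` with `ipb e z = 1` flips the sign of every term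
  have h := Equiv.sum_comp (Equiv.addRight (Pi.single i (Pi.single j 1) : Fin ℓ → Str n))
    (fun y => chi (ipb y z))
  simp only [Equiv.coe_addRight, ipb_add_left, chi_add, ipb_single_left, hzij] at h
  simp only [chi_one, mul_neg_one, sum_neg_distrib] at h
  linarith

/-- The unnormalised Fourier coefficient of `(-1) ^ g` at the character `(-1) ^ ipb y ·`. -/
noncomputable def corr (g : (Fin ℓ → Str n) → ZMod 2) (y : Fin ℓ → Str n) : ℝ :=
  ∑ r, chi (g r + ipb y r)

theorem sum_corr_sq (g : (Fin ℓ → Str n) → ZMod 2) :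
    ∑ y, corr g y ^ 2 = (Fintype.card (Fin ℓ → Str n) : ℝ) ^ 2 := by
  set N : ℝ := (Fintype.card (Fin ℓ → Str n) : ℝ)
  calc ∑ y, corr g y ^ 2
      = ∑ y, ∑ r, ∑ s, chi (g r) * chi (g s) * chi (ipb y (r - s)) := by
        refine sum_congr rfl fun y _ => ?_
        simp only [corr, sq, sum_mul_sum, chi_add, ipb_sub_right, chi_sub]
        refine sum_congr rfl fun r _ => sum_congr rfl fun s _ => by ring
    _ = ∑ r, ∑ s, chi (g r) * chi (g s) * ∑ y, chi (ipb y (r - s)) := by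
        simp only [mul_sum]
        rw [sum_comm]
        exact sum_congr rfl fun r _ => sum_comm
    _ = ∑ r, chi (g r) * chi (g r) * N := by
        simp [sum_chi_ipb_left, sub_eq_zero, N]
    _ = N ^ 2 := by simp [chi_mul_self, sq, N]

noncomputable def heavy (g : (Fin ℓ → Str n) → ZMod 2) (θ : ℝ) : Finset (Fin ℓ → Str n) :=
  univ.filter fun y => θ * Fintype.card (Fin ℓ → Str n) ≤ corr g y

theorem card_heavy_le (g : (Fin ℓ → Str n) → ZMod 2) {θ : ℝ} (hθ : 0 < θ) :
    ((heavy g θ).card : ℝ) ≤ 1 / θ ^ 2 := by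
  set N : ℝ := (Fintype.card (Fin ℓ → Str n) : ℝ)
  have key : ((heavy g θ).card * θ ^ 2) * N ^ 2 ≤ 1 * N ^ 2 := calc
    ((heavy g θ).card * θ ^ 2) * N ^ 2 = ∑ y ∈ heavy g θ, (θ * N) ^ 2 := by
        rw [sum_const, nsmul_eq_mul]; ring
    _ ≤ ∑ y ∈ heavy g θ, corr g y ^ 2 :=
        sum_le_sum fun y hy => pow_le_pow_left₀ (by positivity) (mem_filter.mp hy).2 2
    _ ≤ ∑ y, corr g y ^ 2 :=
        sum_le_sum_of_subset_of_nonneg (subset_univ _) fun _ _ _ => sq_nonneg _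
    _ = 1 * N ^ 2 := by rw [sum_corr_sq, one_mul]
  rw [le_div_iff₀ (by positivity)]
  exact le_of_mul_le_mul_right key (by positivity)

lemma corr_eq (g : (Fin ℓ → Str n) → ZMod 2) (y : Fin ℓ → Str n) :
    corr g y = 2 * (univ.filter fun r => g r = ipb y r).card - Fintype.card (Fin ℓ → Str n) := by
  have h : ∀ r, chi (g r + ipb y r) = 2 * (if g r = ipb y r then 1 else 0) - 1 := fun r => by
    rw [chi_add_eq_ite]; split_ifs <;> norm_num
  simp only [corr, h, sum_sub_distrib, ← mul_sum, sum_boole, sum_const, card_univ, nsmul_eq_mul,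
    mul_one]

lemma mem_heavy_iff (g : (Fin ℓ → Str n) → ZMod 2) (θ : ℝ) (y : Fin ℓ → Str n) :
    y ∈ heavy g θ ↔
      (1 + θ) / 2 * Fintype.card (Fin ℓ → Str n) ≤ (univ.filter fun r => g r = ipb y r).card := by
  simp only [heavy, mem_filter, mem_univ, true_and, corr_eq]
  constructor <;> intro h <;> linarith

end InnerProduct

theorem sum_le_card_filter_mul_add {α : Type*} [Fintype α] (f : α → ℝ) {M : ℝ} (t : ℝ)
    (hM : ∀ x, f x ≤ M) :
    ∑ x, f x ≤ (univ.filter fun x => t ≤ f x).card * M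
      + (Fintype.card α - (univ.filter fun x => t ≤ f x).card) * t := by
  set F := univ.filter fun x => t ≤ f x
  have hF : ∑ x ∈ F, f x ≤ F.card * M := by
    simpa using sum_le_card_nsmul F f M fun x _ => hM x
  have hFc : ∑ x ∈ univ.filter (fun x => ¬t ≤ f x), f x
      ≤ (univ.filter fun x => ¬t ≤ f x).card * t := by
    simpa using sum_le_card_nsmul _ f t fun x hx => (not_le.mp (mem_filter.mp hx).2).le
  have hcard : ((univ.filter fun x => ¬t ≤ f x).card : ℝ) = Fintype.card α - F.card := by
    rw [eq_sub_iff_add_eq', ← Nat.cast_add, card_filter_add_card_filter_not, card_univ]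
  rw [← sum_filter_add_sum_filter_not univ fun x => t ≤ f x]
  rw [hcard] at hFc
  linarith

theorem le_card_filter_of_le_fr {α β : Type} [Fintype α] [Fintype β] [Nonempty β]
    (p : α → β → Prop) [∀ x, DecidablePred (p x)] {θ : ℝ} (hθ : 0 ≤ θ)
    (h : 1 / 2 + θ ≤ fr fun q : α × β => p q.1 q.2) :
    θ * Fintype.card α ≤
      (univ.filter fun x => (1 + θ) / 2 * Fintype.card β ≤ (univ.filter (p x)).card).card := by
  have hB : (0 : ℝ) < Fintype.card β := by exact_mod_cast Fintype.card_pos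
  have hsum : (1 / 2 + θ) * (Fintype.card α * Fintype.card β)
      ≤ ∑ x, ((univ.filter (p x)).card : ℝ) := by
    have hfr : fr (fun q : α × β => p q.1 q.2)
        = (∑ x, ((univ.filter (p x)).card : ℝ)) / (Fintype.card α * Fintype.card β) := by
      rw [fr, Fintype.card_prod, Nat.cast_mul]
      congr 1
      simp only [card_filter, Fintype.sum_prod_type]
      push_cast
      congr
    rw [hfr] at h
    exact mul_le_of_le_div₀ (by positivity) (by positivity) h
  have hsplit := sum_le_card_filter_mul_add (fun x => ((univ.filter (p x)).card : ℝ))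
    ((1 + θ) / 2 * Fintype.card β) fun x => Nat.cast_le.mpr (card_le_univ (univ.filter (p x)))
  set G := (univ.filter fun x => (1 + θ) / 2 * Fintype.card β ≤ (univ.filter (p x)).card).card
  have hG : (0 : ℝ) ≤ G := Nat.cast_nonneg G
  nlinarith [mul_nonneg (mul_nonneg hG hθ) hB.le]

end GoldreichLevin

open GoldreichLevin in
theorem stmt15_general (n ℓ m : ℕ) (hm : 2 ≤ m) (ε : ℝ) (hε : 0 < ε)
    (C : (Fin (m - 1) → ZMod 2) → ZMod 2) :
    ∃ B : (Fin (m - 1) → (Fin ℓ → Str n)) → Finset (Fin ℓ → Str n),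
      (∀ v, ((B v).card : ℝ) ≤ (m : ℝ) ^ 2 / ε ^ 2) ∧
      ∀ Xb : (Fin ℓ → Str n) → (Fin ℓ → Str n),
        1 / 2 + ε / m ≤ fr (fun p : (Fin ℓ → Str n) × (Fin ℓ → Str n) =>
            C (fun j : Fin (m - 1) =>
                ipb (Xb (fun i => shiftStr n (p.1 i) ((j : ℤ) + 1 - m))) p.2)
              = ipb (Xb p.1) p.2) →
        (ε / m) * 2 ^ (ℓ * n) ≤
          ((Finset.univ.filter (fun x : Fin ℓ → Str n =>
            Xb x ∈ B (fun j : Fin (m - 1) =>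
              Xb (fun i => shiftStr n (x i) ((j : ℤ) + 1 - m))))).card : ℝ) := by
  have hθ : 0 < ε / m := div_pos hε (by norm_cast; omega)
  refine ⟨fun v => heavy (fun r => C fun j => ipb (v j) r) (ε / m), fun v => ?_, fun Xb h => ?_⟩
  · calc _ ≤ 1 / (ε / m) ^ 2 := card_heavy_le _ hθ
      _ = (m : ℝ) ^ 2 / ε ^ 2 := by rw [div_pow, one_div_div]
  · have hcard : (2 : ℝ) ^ (ℓ * n) = Fintype.card (Fin ℓ → Str n) := by
      simp [ZMod.card, ← pow_mul, mul_comm]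
    rw [hcard]
    refine (le_card_filter_of_le_fr (fun x r => C (fun j : Fin (m - 1) =>
      ipb (Xb fun i => shiftStr n (x i) ((j : ℤ) + 1 - m)) r) = ipb (Xb x) r) hθ.le h).trans_eq ?_
    simp only [mem_heavy_iff]

theorem stmt15 (n ℓ m : ℕ) (hn : 1 ≤ n) (hℓ : 1 ≤ ℓ) (hm : 2 ≤ m) (ε : ℝ) (hε : 0 < ε)
    (C : (Fin (m - 1) → ZMod 2) → ZMod 2) :
    ∃ B : (Fin (m - 1) → (Fin ℓ → Str n)) → Finset (Fin ℓ → Str n),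
      (∀ v, ((B v).card : ℝ) ≤ (m : ℝ) ^ 2 / ε ^ 2) ∧
      ∀ Xb : (Fin ℓ → Str n) → (Fin ℓ → Str n),
        1 / 2 + ε / m ≤ fr (fun p : (Fin ℓ → Str n) × (Fin ℓ → Str n) =>
            C (fun j : Fin (m - 1) =>
                ipb (Xb (fun i => shiftStr n (p.1 i) ((j : ℤ) + 1 - m))) p.2)
              = ipb (Xb p.1) p.2) →
        (ε / m) * 2 ^ (ℓ * n) ≤
          ((Finset.univ.filter (fun x : Fin ℓ → Str n =>
            Xb x ∈ B (fun j : Fin (m - 1) =>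
              Xb (fun i => shiftStr n (x i) ((j : ℤ) + 1 - m))))).card : ℝ) :=
  stmt15_general n ℓ m hm ε hε C
end

section
/- Let n ≥ 1 and m ≥ 2 be integers, N = 2^n, γ ∈ (0,1], δ ∈ (0,1), and T ≥ 1 an integer; set ℓ = ⌈(3/δ)·log(2/γ)⌉ and w = ⌈6·(1/δ)·log(2/γ)·(1/γ)⌉. Let s ≤ n·w·(ℓ−1)·(m−1) be an integer, q_1, …, q_s ∈ {0,1}^n, and let A : {0,1}^n × ({0,1}^n)^{m−1} × ({0,1}^n)^s → Finset({0,1}^n) be a function all of whose output sets have size at most n·w·T. Then the number of functions X : {0,1}^n → {0,1}^n such that X(x) ∈ A(x, (X(x−m+1), …, X(x−1)), (X(q_1), …, X(q_s))) holds for at least (1−δ)·2^n strings x ∈ {0,1}^n is at most 2^{h+1}, where h = 2δNn + mn + N·log n + N·log 6 + N·log(1/δ) + N·log log(2/γ) + N·log(1/γ) + N·log T + 36·n²·m·(1/γ)·(1/δ)²·(log(2/γ))². -/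
open scoped Classical

section Part1

lemma bin_sum (K v : ℕ) : ∑ j ∈ Finset.range K, v / 2 ^ j % 2 * 2 ^ j = v % 2 ^ K := by
  induction K with
  | zero => simp [Nat.mod_one]
  | succ K ih =>
    rw [Finset.sum_range_succ, ih]
    have h1 : v % 2 ^ (K + 1) / 2 ^ K = v / 2 ^ K % 2 := by
      rw [pow_succ]; exact Nat.mod_mul_right_div_self v (2 ^ K) 2
    have h2 : v % 2 ^ (K + 1) % 2 ^ K = v % 2 ^ K :=
      Nat.mod_mod_of_dvd v (pow_dvd_pow 2 (Nat.le_succ K))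
    have h3 := Nat.div_add_mod (v % 2 ^ (K + 1)) (2 ^ K)
    rw [h1, h2] at h3
    rw [← h3]; ring

lemma strToFin_finToStr (n : ℕ) (v : Fin (2 ^ n)) : strToFin n (finToStr n v) = v := by
  apply Fin.ext
  show (∑ j : Fin n, ((((v : ℕ) / 2 ^ (j : ℕ) % 2 : ℕ) : ZMod 2)).val * 2 ^ (j : ℕ)) = (v : ℕ)
  have : ∀ j : Fin n, ((((v : ℕ) / 2 ^ (j : ℕ) % 2 : ℕ) : ZMod 2)).val = (v : ℕ) / 2 ^ (j : ℕ) % 2 := by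
    intro j
    rw [ZMod.val_natCast]
    omega
  simp only [this]
  rw [Fin.sum_univ_eq_sum_range (fun j => (v : ℕ) / 2 ^ j % 2 * 2 ^ j) n, bin_sum,
    Nat.mod_eq_of_lt v.isLt]

lemma cardStr (n : ℕ) : Fintype.card (Str n) = 2 ^ n := by
  have : Fintype.card (Fin n → ZMod 2) = 2 ^ n := by
    rw [Fintype.card_fun]
    simp
  exact this

lemma finToStr_strToFin (n : ℕ) (x : Str n) : finToStr n (strToFin n x) = x := by
  have hli : Function.LeftInverse (strToFin n) (finToStr n) := strToFin_finToStr n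
  have hinj : Function.Injective (finToStr n) := hli.injective
  have hsurj : Function.Surjective (finToStr n) := by
    have hcard : Fintype.card (Fin (2 ^ n)) = Fintype.card (Str n) := by
      rw [cardStr, Fintype.card_fin]
    exact ((Fintype.bijective_iff_injective_and_card _).2 ⟨hinj, hcard⟩).surjective
  obtain ⟨v, rfl⟩ := hsurj x
  rw [hli v]

lemma shift_val (n : ℕ) (x : Str n) (c : ℕ) (hc : c ≤ (strToFin n x).val) :
    (strToFin n (shiftStr n x (-(c : ℤ)))).val = (strToFin n x).val - c := by
  haveI : NeZero (2 ^ n) := ⟨(by positivity : (0:ℕ) < 2 ^ n).ne'⟩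
  set v := (strToFin n x).val with hv
  have hvlt : v < 2 ^ n := (strToFin n x).isLt
  unfold shiftStr
  rw [strToFin_finToStr]
  show ((((strToFin n x : ℕ) : ZMod (2 ^ n)) + ((-(c:ℤ) : ℤ) : ZMod (2 ^ n)))).val = v - c
  have h1 : ((strToFin n x : ℕ) : ZMod (2 ^ n)) + ((-(c:ℤ) : ℤ) : ZMod (2 ^ n))
      = ((v - c : ℕ) : ZMod (2 ^ n)) := by
    have hsplit : ((v : ℕ) : ZMod (2 ^ n)) = ((v - c : ℕ) : ZMod (2 ^ n)) + ((c : ℕ) : ZMod (2 ^ n)) := by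
      rw [← Nat.cast_add]
      congr 1
      omega
    push_cast
    rw [show ((strToFin n x : ℕ) : ZMod (2 ^ n)) = ((v : ℕ) : ZMod (2 ^ n)) from rfl, hsplit]
    ring
  rw [h1, ZMod.val_natCast_of_lt (by omega)]

lemma pred_lt (n m : ℕ) (x : Str n) (j : Fin (m - 1))
    (hf : ¬ (strToFin n x).val < m - 1) :
    (strToFin n (shiftStr n x ((j : ℤ) + 1 - m))).val < (strToFin n x).val := by
  have hj := j.isLt
  have hc : ((j : ℤ) + 1 - m) = -((m - 1 - (j : ℕ) : ℕ) : ℤ) := by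
    have : ((j : ℤ)) = ((j : ℕ) : ℤ) := rfl
    rw [this]; omega
  rw [hc, shift_val n x _ (by omega)]
  omega

end Part1
section Part2

variable (n m s M : ℕ) (q : Fin s → Str n)
  (A : Str n → (Fin (m - 1) → Str n) → (Fin s → Str n) → Finset (Str n))

noncomputable def decode (B : Finset (Str n)) (vals : {x : Str n // x ∈ B} → Str n)
    (qvals : Fin s → Str n) (fvals : Fin (m - 1) → Str n)
    (idx : {x : Str n // x ∈ Finset.univ \ B} → Fin M) (x : Str n) : Str n :=
  if hB : x ∈ B then vals ⟨x, hB⟩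
  else if hq : ∃ i, q i = x then qvals hq.choose
  else if hf : (strToFin n x).val < m - 1 then fvals ⟨(strToFin n x).val, hf⟩
  else ((A x (fun j => decode B vals qvals fvals idx
      (shiftStr n x ((j : ℤ) + 1 - m))) qvals).toList).getD
      (idx ⟨x, Finset.mem_sdiff.2 ⟨Finset.mem_univ x, hB⟩⟩).val (fun _ => 0)
termination_by (strToFin n x).val
decreasing_by exact pred_lt n m x j hf

abbrev CodeT (K : ℕ) : Type :=
  (B : {B : Finset (Str n) // B.card = K}) ×
    (({x : Str n // x ∈ B.1} → Str n) × (Fin s → Str n) × (Fin (m - 1) → Str n) ×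
      ({x : Str n // x ∈ Finset.univ \ B.1} → Fin M))

noncomputable def Decode (K : ℕ) (c : CodeT n m s M K) : Str n → Str n :=
  decode n m s M q A c.1.1 c.2.1 c.2.2.1 c.2.2.2.1 c.2.2.2.2

noncomputable def encB (K : ℕ) (hM : 0 < M) (X : Str n → Str n) (B : Finset (Str n))
    (hBK : B.card = K) : CodeT n m s M K :=
  ⟨⟨B, hBK⟩,
    fun b => X b.1,
    fun i => X (q i),
    fun j => if hj : (j : ℕ) < 2 ^ n then X (finToStr n ⟨(j : ℕ), hj⟩) else (fun _ => 0),
    fun xx => if hi : ((A xx.1 (fun j => X (shiftStr n xx.1 ((j : ℤ) + 1 - m)))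
          (fun i => X (q i))).toList).idxOf (X xx.1) < M
      then ⟨_, hi⟩ else ⟨0, hM⟩⟩

lemma decode_encB (K : ℕ) (hM : 0 < M) (hA : ∀ x v u, (A x v u).card ≤ M)
    (X : Str n → Str n) (B : Finset (Str n)) (hBK : B.card = K)
    (hBsup : ∀ x : Str n, x ∉ B →
      X x ∈ A x (fun j => X (shiftStr n x ((j : ℤ) + 1 - m))) (fun i => X (q i))) :
    Decode n m s M q A K (encB n m s M q A K hM X B hBK) = X := by
  set fv : Fin (m - 1) → Str n :=
    fun j => if hj : (j : ℕ) < 2 ^ n then X (finToStr n ⟨(j : ℕ), hj⟩) else (fun _ => 0) with hfv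
  set ix : {x : Str n // x ∈ Finset.univ \ B} → Fin M :=
    fun xx => if hi : ((A xx.1 (fun j => X (shiftStr n xx.1 ((j : ℤ) + 1 - m)))
          (fun i => X (q i))).toList).idxOf (X xx.1) < M
      then ⟨_, hi⟩ else ⟨0, hM⟩ with hix
  suffices H : ∀ v (x : Str n), (strToFin n x).val = v →
      decode n m s M q A B (fun b => X b.1) (fun i => X (q i)) fv ix x = X x by
    funext x
    exact H _ x rfl
  intro v
  induction v using Nat.strong_induction_on with
  | _ v ih =>
    intro x hx
    rw [decode]
    by_cases hB : x ∈ B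
    · rw [dif_pos hB]
    · rw [dif_neg hB]
      by_cases hq : ∃ i, q i = x
      · rw [dif_pos hq]
        show X (q hq.choose) = X x
        rw [hq.choose_spec]
      · rw [dif_neg hq]
        by_cases hf : (strToFin n x).val < m - 1
        · rw [dif_pos hf]
          show (if hj : (strToFin n x).val < 2 ^ n then _ else _) = X x
          rw [dif_pos (strToFin n x).isLt]
          rw [show (⟨(strToFin n x).val, (strToFin n x).isLt⟩ : Fin (2 ^ n)) = strToFin n x from rfl,
            finToStr_strToFin]
        · rw [dif_neg hf]
          have hpred : (fun j : Fin (m - 1) => decode n m s M q A B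
              (fun b => X b.1) (fun i => X (q i)) fv ix (shiftStr n x ((j : ℤ) + 1 - m)))
              = (fun j : Fin (m - 1) => X (shiftStr n x ((j : ℤ) + 1 - m))) := by
            funext j
            exact ih _ (hx ▸ pred_lt n m x j hf) _ rfl
          rw [hpred]
          have hgood := hBsup x hB
          set S := A x (fun j => X (shiftStr n x ((j : ℤ) + 1 - m))) (fun i => X (q i)) with hS
          have hmem : X x ∈ S.toList := Finset.mem_toList.2 hgood
          have hltlen : S.toList.idxOf (X x) < S.toList.length :=
            List.idxOf_lt_length_iff.2 hmem
          have hltM : S.toList.idxOf (X x) < M := by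
            refine lt_of_lt_of_le hltlen ?_
            rw [Finset.length_toList]
            exact hA _ _ _
          show S.toList.getD (if hi : S.toList.idxOf (X x) < M
              then (⟨S.toList.idxOf (X x), hi⟩ : Fin M) else ⟨0, hM⟩).val (fun _ => 0) = X x
          rw [dif_pos hltM]
          show S.toList.getD (S.toList.idxOf (X x)) (fun _ => 0) = X x
          rw [List.getD_eq_getElem _ _ hltlen]
          exact List.getElem_idxOf hltlen

end Part2
lemma card_CodeT (n m s M K : ℕ) :
    Fintype.card (CodeT n m s M K)
      = (2 ^ n).choose K * ((2 ^ n) ^ K * ((2 ^ n) ^ s * ((2 ^ n) ^ (m - 1) * M ^ (2 ^ n - K)))) := by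
  rw [Fintype.card_sigma]
  simp only [← Nat.card_eq_fintype_card]
  have hfin : ∀ k : ℕ, Nat.card (Fin k) = k := fun k => by
    rw [Nat.card_eq_fintype_card, Fintype.card_fin]
  simp only [Nat.card_prod, Nat.card_fun, Nat.card_eq_finsetCard, Nat.card_zmod, hfin]
  simp only [Finset.card_univ_diff, Finset.card_univ, ← Nat.card_eq_fintype_card,
    Nat.card_zmod, hfin]
  have hstr : Nat.card (Str n) = 2 ^ n := by rw [Nat.card_eq_fintype_card, cardStr]
  simp only [hstr]
  have hB : ∀ B : {B : Finset (Str n) // B.card = K}, (B.1).card = K := fun B => B.2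
  simp only [hB]
  rw [Finset.sum_const, smul_eq_mul, Finset.card_univ]
  congr 1
  rw [← Nat.card_eq_fintype_card, Nat.card_eq_fintype_card, Fintype.card_finset_len, cardStr]
lemma analytic2 (n m w l1 s Kn N a1 a2 a3 a4 a5 a6 lM L γ δ : ℝ)
    (hn : 1 ≤ n) (hm : 2 ≤ m)
    (hγ0 : 0 < γ) (hγ1 : γ ≤ 1) (hδ0 : 0 < δ) (hδ1 : δ < 1)
    (hL1 : 1 ≤ L)
    (hwup : w ≤ 6 * (1 / δ) * L * (1 / γ) + 1)
    (hl0 : 0 ≤ l1) (hl2 : l1 ≤ 3 * (1 / δ) * L)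
    (hw0 : 0 ≤ w)
    (hsr : s ≤ n * w * l1 * (m - 1))
    (hs0 : 0 ≤ s)
    (hKle : Kn ≤ δ * N) (hKge : δ * N ≤ Kn + 1) (hK0 : 0 ≤ Kn)
    (hN : 0 < N)
    (hlMb : lM ≤ a1 + a2 + a3 + a4 + a5 + a6 + δ / 4)
    (hlM2 : 2 ≤ lM) :
    Kn * n + (Kn * n + (s * n + ((m - 1) * n + (N - Kn) * lM)))
      ≤ (2 * δ * N * n + m * n + N * a1 + N * a2 + N * a3 + N * a4 + N * a5 + N * a6
        + 36 * n ^ 2 * m * (1 / γ) * (1 / δ) ^ 2 * L ^ 2) + 1 := by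
  have hd1 : (1 : ℝ) ≤ 1 / δ := by rw [le_div_iff₀ hδ0]; linarith
  have hg1 : (1 : ℝ) ≤ 1 / γ := by rw [le_div_iff₀ hγ0]; linarith
  -- products of things ≥ 1
  have t1 : (1 : ℝ) ≤ (1 / δ) * L := by
    calc (1 : ℝ) = 1 * 1 := by ring
    _ ≤ (1 / δ) * L := mul_le_mul hd1 hL1 zero_le_one (by linarith)
  have t2 : (1 : ℝ) ≤ (1 / δ) * L * (1 / γ) := by
    calc (1 : ℝ) = 1 * 1 := by ring
    _ ≤ ((1 / δ) * L) * (1 / γ) := mul_le_mul t1 hg1 zero_le_one (by linarith)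
  have hw7 : w ≤ 7 * ((1 / δ) * L * (1 / γ)) := by linarith
  -- s * n bound
  have hm2' : (0 : ℝ) ≤ m - 1 := by linarith
  have hn0 : (0 : ℝ) ≤ n := by linarith
  have step1 : n * w * l1 * (m - 1) ≤ n * (7 * ((1 / δ) * L * (1 / γ))) * (3 * (1 / δ) * L) * m := by
    have g1 : n * w * l1 * (m - 1) ≤ n * (7 * ((1 / δ) * L * (1 / γ))) * l1 * (m - 1) := by
      have := mul_le_mul_of_nonneg_right (mul_le_mul_of_nonneg_right
        (mul_le_mul_of_nonneg_left hw7 hn0) hl0) hm2'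
      linarith [this]
    have g2 : n * (7 * ((1 / δ) * L * (1 / γ))) * l1 * (m - 1)
        ≤ n * (7 * ((1 / δ) * L * (1 / γ))) * (3 * (1 / δ) * L) * (m - 1) := by
      have hnw0 : (0 : ℝ) ≤ n * (7 * ((1 / δ) * L * (1 / γ))) := by
        have : (0 : ℝ) ≤ (1 / δ) * L * (1 / γ) := by linarith
        positivity
      exact mul_le_mul_of_nonneg_right (mul_le_mul_of_nonneg_left hl2 hnw0) hm2'
    have g3 : n * (7 * ((1 / δ) * L * (1 / γ))) * (3 * (1 / δ) * L) * (m - 1)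
        ≤ n * (7 * ((1 / δ) * L * (1 / γ))) * (3 * (1 / δ) * L) * m := by
      have hpos : (0 : ℝ) ≤ n * (7 * ((1 / δ) * L * (1 / γ))) * (3 * (1 / δ) * L) := by
        have h1 : (0 : ℝ) ≤ (1 / δ) * L * (1 / γ) := by linarith
        have h2 : (0 : ℝ) ≤ (1 / δ) * L := by linarith
        positivity
      exact mul_le_mul_of_nonneg_left (by linarith) hpos
    linarith
  have hsn : s * n ≤ 21 * (n ^ 2 * m * (1 / δ) ^ 2 * L ^ 2 * (1 / γ)) := by
    have := mul_le_mul_of_nonneg_right (le_trans hsr step1) hn0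
    calc s * n ≤ (n * (7 * ((1 / δ) * L * (1 / γ))) * (3 * (1 / δ) * L) * m) * n := this
    _ = 21 * (n ^ 2 * m * (1 / δ) ^ 2 * L ^ 2 * (1 / γ)) := by ring
  -- Q ≥ 2
  have e1 : (1 : ℝ) ≤ n ^ 2 := by
    calc (1 : ℝ) = 1 ^ 2 := by ring
    _ ≤ n ^ 2 := pow_le_pow_left₀ zero_le_one hn 2
  have e2 : (1 : ℝ) ≤ (1 / δ) ^ 2 := by
    calc (1 : ℝ) = 1 ^ 2 := by ring
    _ ≤ (1 / δ) ^ 2 := pow_le_pow_left₀ zero_le_one hd1 2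
  have e3 : (1 : ℝ) ≤ L ^ 2 := by
    calc (1 : ℝ) = 1 ^ 2 := by ring
    _ ≤ L ^ 2 := pow_le_pow_left₀ zero_le_one hL1 2
  have f1 : (2 : ℝ) ≤ n ^ 2 * m := by
    calc (2 : ℝ) = 1 * 2 := by ring
    _ ≤ n ^ 2 * m := mul_le_mul e1 hm (by norm_num) (by linarith)
  have f2 : (2 : ℝ) ≤ n ^ 2 * m * (1 / δ) ^ 2 := by
    calc (2 : ℝ) = 2 * 1 := by ring
    _ ≤ (n ^ 2 * m) * ((1 / δ) ^ 2) := mul_le_mul f1 e2 zero_le_one (by linarith)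
  have f3 : (2 : ℝ) ≤ n ^ 2 * m * (1 / δ) ^ 2 * L ^ 2 := by
    calc (2 : ℝ) = 2 * 1 := by ring
    _ ≤ (n ^ 2 * m * (1 / δ) ^ 2) * (L ^ 2) := mul_le_mul f2 e3 zero_le_one (by linarith)
  have hQ2 : (2 : ℝ) ≤ n ^ 2 * m * (1 / δ) ^ 2 * L ^ 2 * (1 / γ) := by
    calc (2 : ℝ) = 2 * 1 := by ring
    _ ≤ (n ^ 2 * m * (1 / δ) ^ 2 * L ^ 2) * (1 / γ) :=
      mul_le_mul f3 hg1 zero_le_one (by linarith)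
  -- final
  have c1 : N * lM ≤ N * (a1 + a2 + a3 + a4 + a5 + a6 + δ / 4) :=
    mul_le_mul_of_nonneg_left hlMb (le_of_lt hN)
  have c2 : 2 * Kn ≤ Kn * lM := by
    have h := mul_le_mul_of_nonneg_left hlM2 hK0
    linarith only [h]
  have c3 : Kn * n ≤ δ * N * n := mul_le_mul_of_nonneg_right hKle hn0
  have c8 : (0 : ℝ) ≤ δ * N := by positivity
  have hQQ : n ^ 2 * m * (1 / δ) ^ 2 * L ^ 2 * (1 / γ)
      = n ^ 2 * m * (1 / γ) * (1 / δ) ^ 2 * L ^ 2 := by ring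
  rw [hQQ] at hsn hQ2
  linarith only [c1, c2, c3, c8, hsn, hQ2, hKge, hn]

lemma analytic (n m T w ℓ s Kn : ℕ) (γ δ : ℝ)
    (hn : 1 ≤ n) (hm : 2 ≤ m) (hT : 1 ≤ T)
    (hγ0 : 0 < γ) (hγ1 : γ ≤ 1) (hδ0 : 0 < δ) (hδ1 : δ < 1)
    (hL1 : 1 ≤ Real.logb 2 (2 / γ))
    (hw6 : 6 ≤ w)
    (hwup : (w : ℝ) ≤ 6 * (1 / δ) * Real.logb 2 (2 / γ) * (1 / γ) + 1)
    (hlm : ((ℓ - 1 : ℕ) : ℝ) ≤ 3 * (1 / δ) * Real.logb 2 (2 / γ))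
    (hs : s ≤ n * w * (ℓ - 1) * (m - 1))
    (hKle : (Kn : ℝ) ≤ δ * 2 ^ n) (hKge : δ * 2 ^ n ≤ (Kn : ℝ) + 1) (hKN : Kn ≤ 2 ^ n) :
    (Kn : ℝ) * n + ((Kn : ℝ) * n + ((s : ℝ) * n
      + (((m - 1 : ℕ) : ℝ) * n + ((2 ^ n - Kn : ℕ) : ℝ) * Real.logb 2 ((n * w * T : ℕ) : ℝ))))
    ≤ (2 * δ * (2 ^ n) * n + m * n + (2 ^ n) * Real.logb 2 n
        + (2 ^ n) * Real.logb 2 6 + (2 ^ n) * Real.logb 2 (1 / δ)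
        + (2 ^ n) * Real.logb 2 (Real.logb 2 (2 / γ))
        + (2 ^ n) * Real.logb 2 (1 / γ) + (2 ^ n) * Real.logb 2 T
        + 36 * n ^ 2 * m * (1 / γ) * (1 / δ) ^ 2 * (Real.logb 2 (2 / γ)) ^ 2) + 1 := by
  have hd1 : (1 : ℝ) ≤ 1 / δ := by rw [le_div_iff₀ hδ0]; linarith
  have hg1 : (1 : ℝ) ≤ 1 / γ := by rw [le_div_iff₀ hγ0]; linarith
  have hd0 : (0 : ℝ) < 1 / δ := by positivity
  have hg0 : (0 : ℝ) < 1 / γ := by positivity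
  have hL0 : (0 : ℝ) < Real.logb 2 (2 / γ) := by linarith
  have hnr : (0 : ℝ) < (n : ℝ) := by exact_mod_cast hn
  have hwr : (0 : ℝ) < (w : ℝ) := by
    have : (0 : ℕ) < w := by omega
    exact_mod_cast this
  have hTr : (0 : ℝ) < (T : ℝ) := by
    have : (0 : ℕ) < T := hT
    exact_mod_cast this
  have hm1c : ((m - 1 : ℕ) : ℝ) = (m : ℝ) - 1 := by
    rw [Nat.cast_sub (by omega)]; norm_num
  have heKc : ((2 ^ n - Kn : ℕ) : ℝ) = (2 : ℝ) ^ n - Kn := by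
    rw [Nat.cast_sub hKN]; push_cast; ring
  rw [hm1c, heKc]
  -- decompose log M
  have hMsplit : Real.logb 2 ((n * w * T : ℕ) : ℝ)
      = Real.logb 2 (n : ℝ) + Real.logb 2 (w : ℝ) + Real.logb 2 (T : ℝ) := by
    have hMeq : ((n * w * T : ℕ) : ℝ) = (n : ℝ) * (w : ℝ) * (T : ℝ) := by push_cast; ring
    rw [hMeq, Real.logb_mul (mul_pos hnr hwr).ne' hTr.ne', Real.logb_mul hnr.ne' hwr.ne']
  -- bound log w
  have hlogw : Real.logb 2 (w : ℝ) ≤ Real.logb 2 6 + Real.logb 2 (1 / δ)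
      + Real.logb 2 (Real.logb 2 (2 / γ)) + Real.logb 2 (1 / γ) + δ / 4 := by
    set L : ℝ := Real.logb 2 (2 / γ) with hLdef
    have hPL : (6 * (1 / δ) * L * (1 / γ)) * (δ * γ / 6) = L := by
      field_simp
    have hPx : (6 * (1 / δ) * L * (1 / γ)) * (1 + δ * γ / 6)
        = 6 * (1 / δ) * L * (1 / γ) + L := by
      rw [mul_add, mul_one, hPL]
    have hP1 : (w : ℝ) ≤ (6 * (1 / δ) * L * (1 / γ)) * (1 + δ * γ / 6) := by
      rw [hPx]; linarith
    have hmono := Real.logb_le_logb_of_le (by norm_num : (1 : ℝ) < 2) hwr hP1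
    have h6d : ((6 : ℝ) * (1 / δ)) ≠ 0 := by positivity
    have h6dL : ((6 : ℝ) * (1 / δ) * L) ≠ 0 :=
      (mul_pos (mul_pos (by norm_num) hd0) hL0).ne'
    have h6dLg : ((6 : ℝ) * (1 / δ) * L * (1 / γ)) ≠ 0 :=
      (mul_pos (mul_pos (mul_pos (by norm_num) hd0) hL0) hg0).ne'
    have h1x : ((1 : ℝ) + δ * γ / 6) ≠ 0 := by positivity
    have hsplit : Real.logb 2 ((6 * (1 / δ) * L * (1 / γ)) * (1 + δ * γ / 6))
        = Real.logb 2 6 + Real.logb 2 (1 / δ) + Real.logb 2 L + Real.logb 2 (1 / γ)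
          + Real.logb 2 (1 + δ * γ / 6) := by
      rw [Real.logb_mul h6dLg h1x, Real.logb_mul h6dL (ne_of_gt hg0),
        Real.logb_mul h6d (ne_of_gt hL0), Real.logb_mul (by norm_num) (ne_of_gt hd0)]
    have hsmall : Real.logb 2 (1 + δ * γ / 6) ≤ δ / 4 := by
      have hlog1 : Real.log (1 + δ * γ / 6) ≤ δ * γ / 6 := by
        have := Real.log_le_sub_one_of_pos (show (0 : ℝ) < 1 + δ * γ / 6 by positivity)
        linarith
      have hlog2 := Real.log_two_gt_d9
      have hlogpos : (0 : ℝ) < Real.log 2 := by linarith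
      have hdg : δ * γ ≤ δ := mul_le_of_le_one_right hδ0.le hγ1
      have hmul : δ * 0.6931471803 ≤ δ * Real.log 2 :=
        mul_le_mul_of_nonneg_left hlog2.le hδ0.le
      rw [Real.logb, div_le_iff₀ hlogpos]
      linarith only [hlog1, hdg, hmul, hδ0]
    rw [hsplit] at hmono
    linarith only [hmono, hsmall]
  have hlMb : Real.logb 2 ((n * w * T : ℕ) : ℝ) ≤ Real.logb 2 (n : ℝ) + Real.logb 2 6
      + Real.logb 2 (1 / δ) + Real.logb 2 (Real.logb 2 (2 / γ)) + Real.logb 2 (1 / γ)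
      + Real.logb 2 (T : ℝ) + δ / 4 := by
    rw [hMsplit]; linarith only [hlogw]
  -- lM at least 2
  have hlM2 : (2 : ℝ) ≤ Real.logb 2 ((n * w * T : ℕ) : ℝ) := by
    have h4 : (4 : ℕ) ≤ n * w * T := by
      have : 6 ≤ n * w * T := by
        calc (6 : ℕ) = 1 * 6 * 1 := by ring
        _ ≤ n * w * T := Nat.mul_le_mul (Nat.mul_le_mul hn hw6) hT
      omega
    have h4M : (4 : ℝ) ≤ ((n * w * T : ℕ) : ℝ) := by exact_mod_cast h4
    have hmono : Real.logb 2 (4 : ℝ) ≤ Real.logb 2 ((n * w * T : ℕ) : ℝ) :=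
      Real.logb_le_logb_of_le (by norm_num) (by norm_num) h4M
    have h42 : Real.logb 2 (4 : ℝ) = 2 := by
      rw [show (4 : ℝ) = 2 ^ (2 : ℕ) by norm_num, Real.logb_pow,
        Real.logb_self_eq_one (by norm_num : (1 : ℝ) < 2)]
      norm_num
    linarith only [hmono, h42 ▸ hmono]
  -- cast s bound
  have hsr : (s : ℝ) ≤ (n : ℝ) * (w : ℝ) * ((ℓ - 1 : ℕ) : ℝ) * (((m : ℝ)) - 1) := by
    have h := (Nat.cast_le (α := ℝ)).2 hs
    push_cast at h
    rw [← hm1c]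
    convert h using 2 <;> push_cast <;> ring
  exact analytic2 n m w ((ℓ - 1 : ℕ) : ℝ) s Kn ((2 : ℝ) ^ n)
    (Real.logb 2 (n : ℝ)) (Real.logb 2 6) (Real.logb 2 (1 / δ))
    (Real.logb 2 (Real.logb 2 (2 / γ))) (Real.logb 2 (1 / γ)) (Real.logb 2 (T : ℝ))
    (Real.logb 2 ((n * w * T : ℕ) : ℝ)) (Real.logb 2 (2 / γ)) γ δ
    (by exact_mod_cast hn) (by exact_mod_cast hm) hγ0 hγ1 hδ0 hδ1 hL1 hwup
    (Nat.cast_nonneg _) hlm (Nat.cast_nonneg _) hsr (Nat.cast_nonneg _)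
    hKle hKge (Nat.cast_nonneg _) (by positivity) hlMb hlM2
set_option maxHeartbeats 1000000 in
theorem stmt17 (n m T : ℕ) (hn : 1 ≤ n) (hm : 2 ≤ m) (hT : 1 ≤ T)
    (γ δ : ℝ) (hγ : γ ∈ Set.Ioc (0 : ℝ) 1) (hδ : δ ∈ Set.Ioo (0 : ℝ) 1)
    (ℓ w : ℕ) (hℓ : (ℓ : ℤ) = ⌈(3 / δ) * Real.logb 2 (2 / γ)⌉)
    (hw : (w : ℤ) = ⌈6 * (1 / δ) * Real.logb 2 (2 / γ) * (1 / γ)⌉)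
    (s : ℕ) (hs : s ≤ n * w * (ℓ - 1) * (m - 1)) (q : Fin s → Str n)
    (A : Str n → (Fin (m - 1) → Str n) → (Fin s → Str n) → Finset (Str n))
    (hA : ∀ x v u, (A x v u).card ≤ n * w * T)
    (h : ℝ)
    (hh : h = 2 * δ * (2 ^ n) * n + m * n + (2 ^ n) * Real.logb 2 n
        + (2 ^ n) * Real.logb 2 6 + (2 ^ n) * Real.logb 2 (1 / δ)
        + (2 ^ n) * Real.logb 2 (Real.logb 2 (2 / γ))
        + (2 ^ n) * Real.logb 2 (1 / γ) + (2 ^ n) * Real.logb 2 T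
        + 36 * n ^ 2 * m * (1 / γ) * (1 / δ) ^ 2 * (Real.logb 2 (2 / γ)) ^ 2) :
    ((Finset.univ.filter (fun X : Str n → Str n =>
        (1 - δ) * 2 ^ n ≤ ((Finset.univ.filter (fun x : Str n =>
            X x ∈ A x (fun j : Fin (m - 1) => X (shiftStr n x ((j : ℤ) + 1 - m)))
              (fun i => X (q i)))).card : ℝ))).card : ℝ)
      ≤ (2 : ℝ) ^ (h + 1) := by
  classical
  obtain ⟨hγ0, hγ1⟩ := hγ
  obtain ⟨hδ0, hδ1⟩ := hδ
  subst hh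
  set L : ℝ := Real.logb 2 (2 / γ) with hLdef
  have h2γ : (2 : ℝ) ≤ 2 / γ := by rw [le_div_iff₀ hγ0]; linarith
  have hL1 : (1 : ℝ) ≤ L := by
    have h := Real.logb_le_logb_of_le (by norm_num : (1 : ℝ) < 2)
      (by norm_num : (0 : ℝ) < 2) h2γ
    rwa [Real.logb_self_eq_one (by norm_num : (1 : ℝ) < 2)] at h
  have hd1 : (1 : ℝ) ≤ 1 / δ := by rw [le_div_iff₀ hδ0]; linarith
  have hg1 : (1 : ℝ) ≤ 1 / γ := by rw [le_div_iff₀ hγ0]; linarith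
  have hdL : (1 : ℝ) ≤ (1 / δ) * L := by nlinarith
  have hdLg : (1 : ℝ) ≤ (1 / δ) * L * (1 / γ) := by nlinarith
  -- w bounds
  have hwreal : ((w : ℤ) : ℝ) = (w : ℝ) := by push_cast; ring
  have hwlow : (6 : ℝ) ≤ (w : ℝ) := by
    have h1 : (6 : ℝ) ≤ 6 * (1 / δ) * L * (1 / γ) := by nlinarith
    have h2 : (6 * (1 / δ) * L * (1 / γ) : ℝ) ≤ ((w : ℤ) : ℝ) := by
      rw [hw]; exact Int.le_ceil _
    rw [hwreal] at h2; linarith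
  have hwup : (w : ℝ) ≤ 6 * (1 / δ) * L * (1 / γ) + 1 := by
    have h2 : ((w : ℤ) : ℝ) < 6 * (1 / δ) * L * (1 / γ) + 1 := by
      rw [hw]; exact Int.ceil_lt_add_one _
    rw [hwreal] at h2; linarith
  have hw7 : (w : ℝ) ≤ 7 * ((1 / δ) * L * (1 / γ)) := by nlinarith
  -- ℓ bounds
  have hlreal : ((ℓ : ℤ) : ℝ) = (ℓ : ℝ) := by push_cast; ring
  have hl1 : 1 ≤ ℓ := by
    have h2 : (3 / δ * L : ℝ) ≤ ((ℓ : ℤ) : ℝ) := by rw [hℓ]; exact Int.le_ceil _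
    rw [hlreal] at h2
    have h3 : (1 : ℝ) ≤ (ℓ : ℝ) := by
      have : (3 : ℝ) / δ * L = 3 * ((1 / δ) * L) := by ring
      rw [this] at h2; nlinarith
    exact_mod_cast h3
  have hlm : ((ℓ - 1 : ℕ) : ℝ) ≤ 3 * (1 / δ) * L := by
    have h2 : ((ℓ : ℤ) : ℝ) < 3 / δ * L + 1 := by rw [hℓ]; exact Int.ceil_lt_add_one _
    rw [hlreal] at h2
    rw [Nat.cast_sub hl1]
    push_cast
    have : (3 : ℝ) / δ * L = 3 * (1 / δ) * L := by ring
    linarith [this ▸ h2]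
  -- M
  set M := n * w * T with hMdef
  have hw6 : 6 ≤ w := by exact_mod_cast hwlow
  have hM6 : 6 ≤ M := by
    calc 6 = 1 * 6 * 1 := by ring
    _ ≤ n * w * T := Nat.mul_le_mul (Nat.mul_le_mul hn hw6) hT
  have hM0 : 0 < M := by omega
  -- K
  set Kn := Nat.floor (δ * 2 ^ n : ℝ) with hKdef
  have hKle : (Kn : ℝ) ≤ δ * 2 ^ n := Nat.floor_le (by positivity)
  have hKge : δ * 2 ^ n ≤ (Kn : ℝ) + 1 := (Nat.lt_floor_add_one _).le
  have h2npos : (0 : ℝ) < 2 ^ n := by positivity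
  have hKN : Kn ≤ 2 ^ n := by
    have h1 : (Kn : ℝ) ≤ ((2 ^ n : ℕ) : ℝ) := by push_cast; nlinarith
    exact_mod_cast h1
  have hKcard : Kn ≤ Fintype.card (Str n) := by rw [cardStr]; exact hKN
  have hne : Nonempty (CodeT n m s M Kn) := by
    obtain ⟨B, -, hB⟩ := Finset.exists_superset_card_eq
      (s := (∅ : Finset (Str n))) (by simp) hKcard
    exact ⟨⟨⟨B, hB⟩, fun _ => (fun _ => 0), fun _ => (fun _ => 0),
      fun _ => (fun _ => 0), fun _ => ⟨0, hM0⟩⟩⟩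
  -- the injection
  have key : (Finset.univ.filter (fun X : Str n → Str n =>
      (1 - δ) * 2 ^ n ≤ ((Finset.univ.filter (fun x : Str n =>
          X x ∈ A x (fun j : Fin (m - 1) => X (shiftStr n x ((j : ℤ) + 1 - m)))
            (fun i => X (q i)))).card : ℝ))).card ≤ Fintype.card (CodeT n m s M Kn) := by
    rw [← Finset.card_univ]
    refine Finset.card_le_card_of_injOn (fun X =>
      if hex : ∃ B : Finset (Str n), (Finset.univ.filter (fun x : Str n =>
          ¬ (X x ∈ A x (fun j : Fin (m - 1) => X (shiftStr n x ((j : ℤ) + 1 - m)))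
            (fun i => X (q i))))) ⊆ B ∧ B.card = Kn
      then encB n m s M q A Kn hM0 X hex.choose hex.choose_spec.2
      else Classical.arbitrary _) (fun X _ => Finset.mem_univ _) ?_
    intro X hX Y hY hXY
    have hbound : ∀ Z : Str n → Str n, Z ∈ Finset.univ.filter (fun X : Str n → Str n =>
        (1 - δ) * 2 ^ n ≤ ((Finset.univ.filter (fun x : Str n =>
            X x ∈ A x (fun j : Fin (m - 1) => X (shiftStr n x ((j : ℤ) + 1 - m)))
              (fun i => X (q i)))).card : ℝ)) →
        ∃ B : Finset (Str n), (Finset.univ.filter (fun x : Str n =>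
          ¬ (Z x ∈ A x (fun j : Fin (m - 1) => Z (shiftStr n x ((j : ℤ) + 1 - m)))
            (fun i => Z (q i))))) ⊆ B ∧ B.card = Kn := by
      intro Z hZ
      have hgood := (Finset.mem_filter.1 hZ).2
      have hsum := Finset.card_filter_add_card_filter_not
        (s := (Finset.univ : Finset (Str n))) (p := fun x : Str n =>
          Z x ∈ A x (fun j : Fin (m - 1) => Z (shiftStr n x ((j : ℤ) + 1 - m)))
            (fun i => Z (q i)))
      rw [Finset.card_univ, cardStr] at hsum
      have hbadle : (Finset.univ.filter (fun x : Str n =>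
          ¬ (Z x ∈ A x (fun j : Fin (m - 1) => Z (shiftStr n x ((j : ℤ) + 1 - m)))
            (fun i => Z (q i))))).card ≤ Kn := by
        apply Nat.le_floor
        have hcast : ((Finset.univ.filter (fun x : Str n =>
            Z x ∈ A x (fun j : Fin (m - 1) => Z (shiftStr n x ((j : ℤ) + 1 - m)))
              (fun i => Z (q i)))).card : ℝ)
            + ((Finset.univ.filter (fun x : Str n =>
            ¬ (Z x ∈ A x (fun j : Fin (m - 1) => Z (shiftStr n x ((j : ℤ) + 1 - m)))
              (fun i => Z (q i))))).card : ℝ) = ((2 : ℝ)) ^ n := by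
          exact_mod_cast congrArg (Nat.cast : ℕ → ℝ) hsum
        linarith
      exact Finset.exists_superset_card_eq hbadle hKcard
    have hexX := hbound X hX
    have hexY := hbound Y hY
    have hdecX : Decode n m s M q A Kn (encB n m s M q A Kn hM0 X hexX.choose
        hexX.choose_spec.2) = X := by
      refine decode_encB n m s M q A Kn hM0 hA X hexX.choose hexX.choose_spec.2 ?_
      intro x hx
      by_contra hbad
      exact hx (hexX.choose_spec.1 (Finset.mem_filter.2 ⟨Finset.mem_univ x, hbad⟩))
    have hdecY : Decode n m s M q A Kn (encB n m s M q A Kn hM0 Y hexY.choose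
        hexY.choose_spec.2) = Y := by
      refine decode_encB n m s M q A Kn hM0 hA Y hexY.choose hexY.choose_spec.2 ?_
      intro x hx
      by_contra hbad
      exact hx (hexY.choose_spec.1 (Finset.mem_filter.2 ⟨Finset.mem_univ x, hbad⟩))
    simp only [dif_pos hexX, dif_pos hexY] at hXY
    rw [← hdecX, ← hdecY, hXY]
  -- numeric bound on the code count
  have hCnat : Fintype.card (CodeT n m s M Kn)
      ≤ (2 ^ n) ^ Kn * ((2 ^ n) ^ Kn * ((2 ^ n) ^ s * ((2 ^ n) ^ (m - 1) * M ^ (2 ^ n - Kn)))) := by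
    rw [card_CodeT]
    exact Nat.mul_le_mul_right _ (Nat.choose_le_pow _ _)
  have hreal : ((Finset.univ.filter (fun X : Str n → Str n =>
      (1 - δ) * 2 ^ n ≤ ((Finset.univ.filter (fun x : Str n =>
          X x ∈ A x (fun j : Fin (m - 1) => X (shiftStr n x ((j : ℤ) + 1 - m)))
            (fun i => X (q i)))).card : ℝ))).card : ℝ)
      ≤ (((2 ^ n) ^ Kn * ((2 ^ n) ^ Kn * ((2 ^ n) ^ s * ((2 ^ n) ^ (m - 1)
          * M ^ (2 ^ n - Kn)))) : ℕ) : ℝ) :=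
    Nat.cast_le.2 (le_trans key hCnat)
  refine le_trans hreal ?_
  -- switch to real exponentials
  set R : ℝ := ((2 : ℝ) ^ n) ^ Kn * (((2 : ℝ) ^ n) ^ Kn * (((2 : ℝ) ^ n) ^ s
    * (((2 : ℝ) ^ n) ^ (m - 1) * (M : ℝ) ^ (2 ^ n - Kn)))) with hRdef
  have hRcast : (((2 ^ n) ^ Kn * ((2 ^ n) ^ Kn * ((2 ^ n) ^ s * ((2 ^ n) ^ (m - 1)
      * M ^ (2 ^ n - Kn)))) : ℕ) : ℝ) = R := by rw [hRdef]; push_cast; ring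
  rw [hRcast]
  have hMr : (0 : ℝ) < (M : ℝ) := by exact_mod_cast hM0
  have hRpos : 0 < R := by
    rw [hRdef]
    refine mul_pos (pow_pos h2npos _) (mul_pos (pow_pos h2npos _)
      (mul_pos (pow_pos h2npos _) (mul_pos (pow_pos h2npos _) (pow_pos hMr _))))
  have hlog2n : Real.logb 2 ((2 : ℝ) ^ n) = (n : ℝ) := by
    rw [Real.logb_pow, Real.logb_self_eq_one (by norm_num : (1 : ℝ) < 2), mul_one]
  have hlogR : Real.logb 2 R = (Kn : ℝ) * n + ((Kn : ℝ) * n + ((s : ℝ) * n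
      + (((m - 1 : ℕ) : ℝ) * n + ((2 ^ n - Kn : ℕ) : ℝ) * Real.logb 2 (M : ℝ)))) := by
    rw [hRdef]
    have hself : Real.logb 2 (2 : ℝ) = 1 := Real.logb_self_eq_one (by norm_num)
    rw [Real.logb_mul (by positivity) ((mul_pos (pow_pos h2npos _) (mul_pos (pow_pos h2npos _)
        (mul_pos (pow_pos h2npos _) (pow_pos hMr _)))).ne'),
      Real.logb_mul (by positivity) ((mul_pos (pow_pos h2npos _)
        (mul_pos (pow_pos h2npos _) (pow_pos hMr _))).ne'),
      Real.logb_mul (by positivity) ((mul_pos (pow_pos h2npos _) (pow_pos hMr _)).ne'),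
      Real.logb_mul (by positivity) ((pow_pos hMr _).ne')]
    simp only [Real.logb_pow, hself, mul_one]
  have hfinal : Real.logb 2 R ≤ (2 * δ * (2 ^ n) * n + m * n + (2 ^ n) * Real.logb 2 n
      + (2 ^ n) * Real.logb 2 6 + (2 ^ n) * Real.logb 2 (1 / δ)
      + (2 ^ n) * Real.logb 2 L
      + (2 ^ n) * Real.logb 2 (1 / γ) + (2 ^ n) * Real.logb 2 T
      + 36 * n ^ 2 * m * (1 / γ) * (1 / δ) ^ 2 * L ^ 2) + 1 := by
    rw [hlogR]
    exact analytic n m T w ℓ s Kn γ δ hn hm hT hγ0 hγ1 hδ0 hδ1 hL1 hw6 hwup hlm hs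
      hKle hKge hKN
  calc R = (2 : ℝ) ^ Real.logb 2 R :=
        (Real.rpow_logb (by norm_num) (by norm_num) hRpos).symm
    _ ≤ (2 : ℝ) ^ ((2 * δ * (2 ^ n) * n + m * n + (2 ^ n) * Real.logb 2 n
        + (2 ^ n) * Real.logb 2 6 + (2 ^ n) * Real.logb 2 (1 / δ)
        + (2 ^ n) * Real.logb 2 L
        + (2 ^ n) * Real.logb 2 (1 / γ) + (2 ^ n) * Real.logb 2 T
        + 36 * n ^ 2 * m * (1 / γ) * (1 / δ) ^ 2 * L ^ 2) + 1) :=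
      (Real.rpow_le_rpow_left_iff (by norm_num : (1 : ℝ) < 2)).2 hfinal
end
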